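/- arXiv:2402.14754 — 6 statements merged into one kernel-verified Lean document; each statement's English description precedes it below -/
import Mathlib

section
/- Let λ be a Young diagram. If for some odd positive integer m the diagram λ has at least two columns of length exactly m, then mult(λ, k) = 0 for every k ∈ ℕ. -/
open scoped Classical

namespace YoungDiagram

/-- `lam / μ` is a vertical strip of length `k`: `μ ⊆ lam`, the complement consists of
exactly `k` boxes, and no two boxes of the complement lie in the same row. -/
def IsVerticalStrip (μ lam : YoungDiagram) (k : ℕ) : Prop :=
  μ ≤ lam ∧ (lam.cells \ μ.cells).card = k ∧
    ∀ c₁ ∈ lam.cells \ μ.cells, ∀ c₂ ∈ lam.cells \ μ.cells, c₁.1 = c₂.1 → c₁ = c₂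

/-- Every column of `μ` has even length. -/
def HasEvenColumns (μ : YoungDiagram) : Prop := ∀ j, Even (μ.colLen j)

/-- `mult lam k` is the number of subdiagrams `μ ⊆ lam` with even columns such that
`lam / μ` is a vertical strip of length `k`. -/
noncomputable def mult (lam : YoungDiagram) (k : ℕ) : ℕ :=
  Nat.card {μ : YoungDiagram // μ ≤ lam ∧ μ.HasEvenColumns ∧ IsVerticalStrip μ lam k}

/-- The height of a Young diagram: the number of nonempty rows. -/
def ht (lam : YoungDiagram) : ℕ := lam.colLen 0

/-- A Young diagram is mildly odd if for every odd `m` it has at most one column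
of length exactly `m`. -/
def MildlyOdd (lam : YoungDiagram) : Prop :=
  ∀ m : ℕ, Odd m → ∀ j₁ j₂ : ℕ, lam.colLen j₁ = m → lam.colLen j₂ = m → j₁ = j₂

/-- The number of columns of odd length. -/
noncomputable def oddColumns (lam : YoungDiagram) : ℕ :=
  ((Finset.range (lam.rowLen 0)).filter fun j => Odd (lam.colLen j)).card

/-- The profile of a Young diagram: for the distinct nonzero row lengths
`ℓ₀ > ℓ₁ > … > ℓₙ`, the list of multiplicities `hᵢ = #{rows of length ℓᵢ}`. -/
noncomputable def profile (lam : YoungDiagram) : List ℕ :=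
  lam.rowLens.dedup.map fun ℓ => lam.rowLens.count ℓ

/-- Every entry of the profile is even. -/
def HasEvenProfile (lam : YoungDiagram) : Prop := ∀ h ∈ lam.profile, Even h

end YoungDiagram

/-- If for some odd positive integer `m` the diagram `lam` has at least two
columns of length exactly `m`, then `mult lam k = 0` for every `k`. -/
theorem mult_eq_zero_of_two_odd_columns (lam : YoungDiagram) (m : ℕ) (hm : Odd m)
    (j₁ j₂ : ℕ) (hne : j₁ ≠ j₂)
    (h₁ : lam.colLen j₁ = m) (h₂ : lam.colLen j₂ = m) :
    ∀ k : ℕ, lam.mult k = 0 := by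
  intro k
  rw [YoungDiagram.mult, Nat.card_eq_zero]
  left
  constructor
  rintro ⟨μ, hle, heven, -, -, hvs⟩
  have hmpos : 0 < m := hm.pos
  have key : ∀ j, lam.colLen j = m → (m - 1, j) ∈ lam.cells \ μ.cells := by
    intro j hj
    have h1 : (m - 1, j) ∈ lam := by
      rw [YoungDiagram.mem_iff_lt_colLen, hj]
      omega
    have h2 : (m - 1, j) ∉ μ := by
      rw [YoungDiagram.mem_iff_lt_colLen]
      have hle' : μ.colLen j ≤ m := by
        by_contra h
        push_neg at h
        have : (m, j) ∈ μ := YoungDiagram.mem_iff_lt_colLen.mpr h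
        have : (m, j) ∈ lam := hle this
        rw [YoungDiagram.mem_iff_lt_colLen, hj] at this
        omega
      have hne' : μ.colLen j ≠ m := by
        intro h
        exact (Nat.not_even_iff_odd.mpr hm) (h ▸ heven j)
      omega
    simp [Finset.mem_sdiff, h1, h2]
  have := hvs (m - 1, j₁) (key j₁ h₁) (m - 1, j₂) (key j₂ h₂) rfl
  exact hne (congrArg Prod.snd this)
end

section
/- Let λ be a mildly odd Young diagram and let c = #oddcolumns(λ). Then there exists a Young diagram λᵉᵛ with even profile such that ht(λᵉᵛ) = 2⌈ht(λ)/2⌉ − 2c, such that mult(λ, k) = mult(λᵉᵛ, k − c) for every integer k ≥ c, and mult(λ, k) = 0 for every integer k with 0 ≤ k < c. -/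
open scoped Classical

namespace YoungDiagram

section aux

lemma colLen_zero_of_ge {lam : YoungDiagram} {j : ℕ} (h : lam.rowLen 0 ≤ j) :
    lam.colLen j = 0 := by
  by_contra hc
  have h0 : (0, j) ∈ lam := mem_iff_lt_colLen.2 (Nat.pos_of_ne_zero hc)
  have := mem_iff_lt_rowLen.1 h0
  omega

lemma colLen_le_of_le {μ ν : YoungDiagram} (h : μ ≤ ν) (j : ℕ) :
    μ.colLen j ≤ ν.colLen j := by
  by_contra hc
  push_neg at hc
  have h1 : (ν.colLen j, j) ∈ μ := mem_iff_lt_colLen.2 hc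
  have := mem_iff_lt_colLen.1 (h h1)
  omega

lemma colLen_eq_of_mem_iff {μ : YoungDiagram} {j n : ℕ}
    (h : ∀ i, (i, j) ∈ μ ↔ i < n) : μ.colLen j = n := by
  rcases Nat.lt_trichotomy (μ.colLen j) n with hlt | heq | hgt
  · have := mem_iff_lt_colLen.1 ((h (μ.colLen j)).2 hlt); omega
  · exact heq
  · have := (h n).1 (mem_iff_lt_colLen.2 hgt); omega

/-- Restriction of a Young diagram to a prescribed antitone column-length function. -/
def colRestrict (lam : YoungDiagram) (m : ℕ → ℕ) (hle : ∀ j, m j ≤ lam.colLen j)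
    (hant : Antitone m) : YoungDiagram where
  cells := lam.cells.filter fun c => c.1 < m c.2
  isLowerSet := by
    rintro ⟨i2, j2⟩ ⟨i1, j1⟩ hle' hmem
    obtain ⟨hi, hj⟩ := Prod.mk_le_mk.1 hle'
    simp only [Finset.coe_filter, Set.mem_setOf_eq, Finset.mem_coe, mem_cells] at hmem ⊢
    exact ⟨lam.up_left_mem hi hj hmem.1, lt_of_le_of_lt hi (lt_of_lt_of_le hmem.2 (hant hj))⟩

lemma mem_colRestrict {lam : YoungDiagram} {m : ℕ → ℕ} {hle : ∀ j, m j ≤ lam.colLen j}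
    {hant : Antitone m} {i j : ℕ} :
    (i, j) ∈ colRestrict lam m hle hant ↔ i < m j := by
  constructor
  · intro h
    simpa using (Finset.mem_filter.1 h).2
  · intro h
    refine Finset.mem_filter.2 ⟨?_, by simpa using h⟩
    exact mem_iff_lt_colLen.2 (lt_of_lt_of_le h (hle j))

lemma colRestrict_le {lam : YoungDiagram} {m : ℕ → ℕ} {hle : ∀ j, m j ≤ lam.colLen j}
    {hant : Antitone m} : colRestrict lam m hle hant ≤ lam := fun c hc =>
  (Finset.mem_filter.1 hc).1

lemma colLen_colRestrict {lam : YoungDiagram} {m : ℕ → ℕ} {hle : ∀ j, m j ≤ lam.colLen j}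
    {hant : Antitone m} (j : ℕ) : (colRestrict lam m hle hant).colLen j = m j :=
  colLen_eq_of_mem_iff fun _ => mem_colRestrict

/-- counting the complement column by column -/
lemma card_sdiff_cells {μ lam : YoungDiagram} (h : μ ≤ lam) :
    (lam.cells \ μ.cells).card
      = ∑ j ∈ Finset.range (lam.rowLen 0), (lam.colLen j - μ.colLen j) := by
  rw [Finset.card_eq_sum_card_fiberwise
    (f := Prod.snd) (t := Finset.range (lam.rowLen 0)) ?_]
  · refine Finset.sum_congr rfl fun j _ => ?_
    have : (lam.cells \ μ.cells).filter (fun x => x.snd = j)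
        = (Finset.Ico (μ.colLen j) (lam.colLen j)).map
            ⟨fun i => (i, j), fun a b hab => by simpa using hab⟩ := by
      ext ⟨i, j'⟩
      simp only [Finset.mem_filter, Finset.mem_sdiff, mem_cells, Finset.mem_map,
        Finset.mem_Ico, Function.Embedding.coeFn_mk, Prod.mk.injEq]
      constructor
      · rintro ⟨⟨h1, h2⟩, rfl⟩
        exact ⟨i, ⟨by simpa using fun hm => h2 (mem_iff_lt_colLen.2 hm),
          mem_iff_lt_colLen.1 h1⟩, rfl⟩
      · rintro ⟨i', ⟨hm, hl⟩, heq⟩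
        obtain ⟨rfl, rfl⟩ := Prod.mk.inj heq
        exact ⟨⟨mem_iff_lt_colLen.2 hl, fun hc => by
          have := mem_iff_lt_colLen.1 hc; omega⟩, rfl⟩
    rw [this, Finset.card_map, Nat.card_Ico]
  · rintro ⟨i, j⟩ hx
    have h1 : (i, j) ∈ lam := (Finset.mem_sdiff.1 hx).1
    have := mem_iff_lt_rowLen.1 h1
    have := lam.rowLen_anti 0 i (Nat.zero_le i)
    simp only [Finset.mem_range]
    rw [Finset.mem_coe, Finset.mem_range]
    omega

end aux

section dcond

/-- allowed number of removed boxes in column `j` -/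
def Dcond (lam : YoungDiagram) (j v : ℕ) : Prop :=
  v % 2 = lam.colLen j % 2 ∧ v ≤ lam.colLen j - lam.colLen (j + 1)

lemma Dcond.zero_of_ge {lam : YoungDiagram} {j v : ℕ} (h : Dcond lam j v)
    (hj : lam.rowLen 0 ≤ j) : v = 0 := by
  have h0 := colLen_zero_of_ge hj
  obtain ⟨h1, h2⟩ := h
  omega

lemma sum_eq_sum_of_dcond {lam : YoungDiagram} {d : ℕ → ℕ}
    (hd : ∀ j, Dcond lam j (d j)) {W : ℕ} (hW : lam.rowLen 0 ≤ W) :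
    ∑ j ∈ Finset.range W, d j = ∑ j ∈ Finset.range (lam.rowLen 0), d j := by
  refine (Finset.sum_subset (Finset.range_subset_range.2 hW) ?_).symm
  intro j _ hj
  simp only [Finset.mem_range, not_lt] at hj
  exact (hd j).zero_of_ge hj

/-- the diagram obtained from `lam` by removing `d j` boxes from the bottom of column `j` -/
def ofD (lam : YoungDiagram) (d : ℕ → ℕ) (hd : ∀ j, Dcond lam j (d j)) : YoungDiagram :=
  colRestrict lam (fun j => lam.colLen j - d j) (fun j => Nat.sub_le _ _)
    (antitone_nat_of_succ_le fun j => by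
      have h1 := (hd j).2
      have h2 := lam.colLen_anti j (j + 1) (Nat.le_succ j)
      omega)

lemma mem_ofD {lam : YoungDiagram} {d : ℕ → ℕ} {hd : ∀ j, Dcond lam j (d j)} {i j : ℕ} :
    (i, j) ∈ ofD lam d hd ↔ i < lam.colLen j - d j := mem_colRestrict

lemma colLen_ofD {lam : YoungDiagram} {d : ℕ → ℕ} {hd : ∀ j, Dcond lam j (d j)} (j : ℕ) :
    (ofD lam d hd).colLen j = lam.colLen j - d j := colLen_colRestrict j

lemma ofD_le {lam : YoungDiagram} {d : ℕ → ℕ} {hd : ∀ j, Dcond lam j (d j)} :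
    ofD lam d hd ≤ lam := colRestrict_le

lemma dcond_le_colLen {lam : YoungDiagram} {j v : ℕ} (h : Dcond lam j v) :
    v ≤ lam.colLen j := by
  have h2 := h.2
  omega

lemma ofD_evenColumns {lam : YoungDiagram} {d : ℕ → ℕ} {hd : ∀ j, Dcond lam j (d j)} :
    (ofD lam d hd).HasEvenColumns := by
  intro j
  rw [colLen_ofD, Nat.even_iff]
  have h1 := (hd j).1
  have h2 := dcond_le_colLen (hd j)
  omega

lemma ofD_strip {lam : YoungDiagram} {d : ℕ → ℕ} {hd : ∀ j, Dcond lam j (d j)} {k : ℕ}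
    (hsum : ∑ j ∈ Finset.range (lam.rowLen 0), d j = k) :
    IsVerticalStrip (ofD lam d hd) lam k := by
  refine ⟨ofD_le, ?_, ?_⟩
  · rw [card_sdiff_cells (ofD_le (hd := hd)), ← hsum]
    refine Finset.sum_congr rfl fun j _ => ?_
    rw [colLen_ofD]
    have := dcond_le_colLen (hd j)
    omega
  · -- no two removed boxes in the same row
    have key : ∀ i a b : ℕ, a < b → (i, a) ∈ lam.cells \ (ofD lam d hd).cells →
        (i, b) ∈ lam.cells \ (ofD lam d hd).cells → False := by
      intro i a b hab ha hb
      obtain ⟨ha1, ha2⟩ := Finset.mem_sdiff.1 ha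
      obtain ⟨hb1, hb2⟩ := Finset.mem_sdiff.1 hb
      have hma : lam.colLen a - d a ≤ i := le_of_not_gt fun hc => ha2 (mem_ofD.2 hc)
      have hib : i < lam.colLen b := mem_iff_lt_colLen.1 hb1
      have hmono : lam.colLen b ≤ lam.colLen (a + 1) := lam.colLen_anti _ _ hab
      have hbound := (hd a).2
      have := lam.colLen_anti a (a + 1) (Nat.le_succ a)
      omega
    rintro ⟨i1, j1⟩ h1 ⟨i2, j2⟩ h2 heq
    simp only at heq
    subst heq
    rcases Nat.lt_trichotomy j1 j2 with h | h | h
    · exact absurd (key i1 j1 j2 h h1 h2) (by simp)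
    · rw [h]
    · exact absurd (key i1 j2 j1 h h2 h1) (by simp)

lemma strip_lower {μ lam : YoungDiagram} {k : ℕ} (hs : IsVerticalStrip μ lam k) (j : ℕ) :
    lam.colLen (j + 1) ≤ μ.colLen j ∨ μ.colLen j = lam.colLen j := by
  obtain ⟨hle, -, hrow⟩ := hs
  by_contra hcon
  push_neg at hcon
  obtain ⟨h1, h2⟩ := hcon
  have hmlt : μ.colLen j < lam.colLen j := lt_of_le_of_ne (colLen_le_of_le hle j) h2
  have hc1 : (μ.colLen j, j) ∈ lam.cells \ μ.cells := by
    rw [Finset.mem_sdiff, mem_cells, mem_cells]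
    exact ⟨mem_iff_lt_colLen.2 hmlt, fun hc => by
      have := mem_iff_lt_colLen.1 hc; omega⟩
  have hc2 : (μ.colLen j, j + 1) ∈ lam.cells \ μ.cells := by
    rw [Finset.mem_sdiff, mem_cells, mem_cells]
    refine ⟨mem_iff_lt_colLen.2 h1, fun hc => ?_⟩
    have := mem_iff_lt_colLen.1 hc
    have := μ.colLen_anti j (j + 1) (Nat.le_succ j)
    omega
  simpa using hrow _ hc1 _ hc2 rfl

lemma toD_valid {μ lam : YoungDiagram} {k : ℕ} (hle : μ ≤ lam) (hev : μ.HasEvenColumns)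
    (hstrip : IsVerticalStrip μ lam k) :
    (∀ j, Dcond lam j (lam.colLen j - μ.colLen j)) ∧
      ∑ j ∈ Finset.range (lam.rowLen 0), (lam.colLen j - μ.colLen j) = k := by
  refine ⟨fun j => ⟨?_, ?_⟩, ?_⟩
  · have h1 := colLen_le_of_le hle j
    have h2 := (hev j)
    rw [Nat.even_iff] at h2
    omega
  · have h1 := colLen_le_of_le hle j
    have h3 := lam.colLen_anti j (j + 1) (Nat.le_succ j)
    rcases strip_lower hstrip j with h | h <;> omega
  · rw [← hstrip.2.1, card_sdiff_cells hle]

/-- The main encoding: subdiagrams with even columns and vertical-strip complement of size `k`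
correspond to column-removal vectors. -/
noncomputable def multEquiv (lam : YoungDiagram) (k : ℕ) :
    {μ : YoungDiagram // μ ≤ lam ∧ μ.HasEvenColumns ∧ IsVerticalStrip μ lam k} ≃
      {d : ℕ → ℕ // (∀ j, Dcond lam j (d j)) ∧
        ∑ j ∈ Finset.range (lam.rowLen 0), d j = k} where
  toFun μp := ⟨fun j => lam.colLen j - μp.1.colLen j,
    toD_valid μp.2.1 μp.2.2.1 μp.2.2.2⟩
  invFun dp := ⟨ofD lam dp.1 dp.2.1, ofD_le, ofD_evenColumns, ofD_strip dp.2.2⟩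
  left_inv := by
    rintro ⟨μ, hle, hev, hstrip⟩
    apply Subtype.ext
    apply SetLike.ext
    rintro ⟨i, j⟩
    rw [mem_ofD, Nat.sub_sub_self (colLen_le_of_le hle j), mem_iff_lt_colLen]
  right_inv := by
    rintro ⟨d, hd, hsum⟩
    apply Subtype.ext
    funext j
    simp only [colLen_ofD]
    exact Nat.sub_sub_self (dcond_le_colLen (hd j))

lemma mult_eq_card (lam : YoungDiagram) (k : ℕ) :
    mult lam k = Nat.card {d : ℕ → ℕ // (∀ j, Dcond lam j (d j)) ∧
      ∑ j ∈ Finset.range (lam.rowLen 0), d j = k} :=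
  Nat.card_congr (multEquiv lam k)

end dcond

section evenization

/-- parity of the length of column `j` -/
def pcol (lam : YoungDiagram) (j : ℕ) : ℕ := lam.colLen j % 2

/-- column-length differences for the evenization -/
def dmaxCol (lam : YoungDiagram) (j : ℕ) : ℕ :=
  lam.colLen j - lam.colLen (j + 1) - pcol lam j - pcol lam (j + 1)

/-- column lengths of the evenization -/
def evCol (lam : YoungDiagram) (j : ℕ) : ℕ :=
  ∑ i ∈ Finset.Ico j (lam.rowLen 0), dmaxCol lam i

variable {lam : YoungDiagram}

lemma dmaxCol_spec (hmo : lam.MildlyOdd) (j : ℕ) :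
    lam.colLen (j + 1) + pcol lam j + pcol lam (j + 1) + dmaxCol lam j = lam.colLen j := by
  have hanti := lam.colLen_anti j (j + 1) (Nat.le_succ j)
  have hp0 : pcol lam j = lam.colLen j % 2 := rfl
  have hp1 : pcol lam (j + 1) = lam.colLen (j + 1) % 2 := rfl
  have hd : dmaxCol lam j
      = lam.colLen j - lam.colLen (j + 1) - pcol lam j - pcol lam (j + 1) := rfl
  by_cases h1 : lam.colLen j % 2 = 1
  · by_cases h2 : lam.colLen (j + 1) % 2 = 1
    · have hne : lam.colLen (j + 1) ≠ lam.colLen j := by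
        intro heq
        have := hmo (lam.colLen j) (Nat.odd_iff.2 h1) j (j + 1) rfl heq
        omega
      omega
    · omega
  · by_cases h2 : lam.colLen (j + 1) % 2 = 1
    · omega
    · omega

lemma dmaxCol_zero_of_ge {j : ℕ} (hj : lam.rowLen 0 ≤ j) : dmaxCol lam j = 0 := by
  have h0 := colLen_zero_of_ge hj
  have h1 := colLen_zero_of_ge (hj.trans (Nat.le_succ j))
  have hd : dmaxCol lam j
      = lam.colLen j - lam.colLen (j + 1) - pcol lam j - pcol lam (j + 1) := rfl
  omega

lemma evCol_zero_of_ge {j : ℕ} (hj : lam.rowLen 0 ≤ j) : evCol lam j = 0 := by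
  rw [evCol, Finset.Ico_eq_empty (by omega), Finset.sum_empty]

lemma evCol_succ (j : ℕ) : evCol lam j = dmaxCol lam j + evCol lam (j + 1) := by
  by_cases hj : j < lam.rowLen 0
  · rw [evCol, evCol, Finset.sum_eq_sum_Ico_succ_bot hj]
  · rw [evCol_zero_of_ge (by omega), evCol_zero_of_ge (by omega),
      dmaxCol_zero_of_ge (by omega)]

lemma evCol_le (hmo : lam.MildlyOdd) (j : ℕ) : evCol lam j ≤ lam.colLen j := by
  obtain ⟨n, hn⟩ : ∃ n, lam.rowLen 0 ≤ j + n := ⟨lam.rowLen 0, by omega⟩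
  induction n generalizing j with
  | zero => rw [evCol_zero_of_ge (by omega)]; omega
  | succ n ih =>
    by_cases hj : j < lam.rowLen 0
    · have h1 := ih (j + 1) (by omega)
      have h2 := dmaxCol_spec hmo j
      rw [evCol_succ]
      omega
    · rw [evCol_zero_of_ge (by omega)]; omega

lemma evCol_anti : Antitone (evCol lam) := by
  apply antitone_nat_of_succ_le
  intro j
  have := evCol_succ (lam := lam) j
  omega

lemma evCol_even (j : ℕ) : evCol lam j % 2 = 0 := by
  rw [evCol, Finset.sum_nat_mod]
  have : ∀ i ∈ Finset.Ico j (lam.rowLen 0), dmaxCol lam i % 2 = 0 := by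
    intro i _
    have hanti := lam.colLen_anti i (i + 1) (Nat.le_succ i)
    have hp0 : pcol lam i = lam.colLen i % 2 := rfl
    have hp1 : pcol lam (i + 1) = lam.colLen (i + 1) % 2 := rfl
    have hd : dmaxCol lam i
        = lam.colLen i - lam.colLen (i + 1) - pcol lam i - pcol lam (i + 1) := rfl
    omega
  rw [Finset.sum_congr rfl this]
  simp

/-- The evenization of a mildly odd Young diagram. -/
def evenization (lam : YoungDiagram) (hmo : lam.MildlyOdd) : YoungDiagram :=
  colRestrict lam (evCol lam) (evCol_le hmo) evCol_anti

lemma colLen_evenization (hmo : lam.MildlyOdd) (j : ℕ) :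
    (evenization lam hmo).colLen j = evCol lam j := colLen_colRestrict j

lemma oddColumns_eq_sum :
    lam.oddColumns = ∑ j ∈ Finset.range (lam.rowLen 0), pcol lam j := by
  rw [oddColumns, Finset.card_filter]
  refine Finset.sum_congr rfl fun j _ => ?_
  by_cases h : Odd (lam.colLen j)
  · rw [if_pos h]
    have := Nat.odd_iff.1 h
    rw [pcol, this]
  · rw [if_neg h]
    rw [Nat.odd_iff] at h
    rw [pcol]
    omega

lemma evCol_zero_add (hmo : lam.MildlyOdd) :
    evCol lam 0 + 2 * lam.oddColumns = lam.colLen 0 + pcol lam 0 := by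
  have hsum : ∑ j ∈ Finset.range (lam.rowLen 0),
      (lam.colLen (j + 1) + pcol lam j + pcol lam (j + 1) + dmaxCol lam j)
      = ∑ j ∈ Finset.range (lam.rowLen 0), lam.colLen j :=
    Finset.sum_congr rfl fun j _ => by rw [dmaxCol_spec hmo j]
  rw [Finset.sum_add_distrib, Finset.sum_add_distrib, Finset.sum_add_distrib] at hsum
  have hshift : ∀ f : ℕ → ℕ, f (lam.rowLen 0) = 0 →
      ∑ j ∈ Finset.range (lam.rowLen 0), f (j + 1) + f 0
        = ∑ j ∈ Finset.range (lam.rowLen 0), f j := by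
    intro f hf
    have := Finset.sum_range_succ' f (lam.rowLen 0)
    rw [Finset.sum_range_succ] at this
    omega
  have h1 := hshift (lam.colLen) (colLen_zero_of_ge le_rfl)
  have h2 := hshift (pcol lam) (by rw [pcol, colLen_zero_of_ge le_rfl])
  have h3 : evCol lam 0 = ∑ j ∈ Finset.range (lam.rowLen 0), dmaxCol lam j := by
    rw [evCol, Finset.range_eq_Ico]
  have h4 := oddColumns_eq_sum (lam := lam)
  omega

end evenization

section transfer

variable {lam : YoungDiagram}

lemma rowLen_le_of_le {μ ν : YoungDiagram} (h : μ ≤ ν) (i : ℕ) :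
    μ.rowLen i ≤ ν.rowLen i := by
  by_contra hc
  push_neg at hc
  have h1 : (i, ν.rowLen i) ∈ μ := mem_iff_lt_rowLen.2 hc
  have := mem_iff_lt_rowLen.1 (h h1)
  omega

lemma dcond_evenization_iff (hmo : lam.MildlyOdd) (j v : ℕ) :
    Dcond (evenization lam hmo) j v ↔ v % 2 = 0 ∧ v ≤ dmaxCol lam j := by
  rw [Dcond, colLen_evenization, colLen_evenization]
  have h1 := evCol_even (lam := lam) j
  have h2 := evCol_succ (lam := lam) j
  constructor
  · rintro ⟨ha, hb⟩; omega
  · rintro ⟨ha, hb⟩; omega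

lemma dcond_shift (hmo : lam.MildlyOdd) (j v : ℕ) :
    Dcond lam j v ↔
      (pcol lam j ≤ v ∧ Dcond (evenization lam hmo) j (v - pcol lam j)) := by
  rw [dcond_evenization_iff hmo]
  have hspec := dmaxCol_spec hmo j
  have hp0 : pcol lam j = lam.colLen j % 2 := rfl
  have hp1 : pcol lam (j + 1) = lam.colLen (j + 1) % 2 := rfl
  rw [Dcond]
  constructor
  · rintro ⟨ha, hb⟩
    refine ⟨by omega, by omega, by omega⟩
  · rintro ⟨ha, hb, hc⟩
    exact ⟨by omega, by omega⟩

lemma evenization_rowLen_le (hmo : lam.MildlyOdd) :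
    (evenization lam hmo).rowLen 0 ≤ lam.rowLen 0 :=
  rowLen_le_of_le colRestrict_le 0

lemma pcol_le_of_dcond (hmo : lam.MildlyOdd) {j v : ℕ} (h : Dcond lam j v) :
    pcol lam j ≤ v := ((dcond_shift hmo j v).1 h).1

/-- The key bijection between removal vectors for `lam` and for its evenization. -/
noncomputable def shiftEquiv (hmo : lam.MildlyOdd) (k : ℕ) (hk : lam.oddColumns ≤ k) :
    {d : ℕ → ℕ // (∀ j, Dcond lam j (d j)) ∧
        ∑ j ∈ Finset.range (lam.rowLen 0), d j = k} ≃
      {d : ℕ → ℕ // (∀ j, Dcond (evenization lam hmo) j (d j)) ∧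
        ∑ j ∈ Finset.range ((evenization lam hmo).rowLen 0), d j
          = k - lam.oddColumns} where
  toFun dp := ⟨fun j => dp.1 j - pcol lam j, by
    obtain ⟨d, hd, hsum⟩ := dp
    have hdc : ∀ j, Dcond (evenization lam hmo) j (d j - pcol lam j) :=
      fun j => ((dcond_shift hmo j (d j)).1 (hd j)).2
    refine ⟨hdc, ?_⟩
    show ∑ j ∈ Finset.range ((evenization lam hmo).rowLen 0), (d j - pcol lam j)
      = k - lam.oddColumns
    rw [← sum_eq_sum_of_dcond hdc (evenization_rowLen_le hmo)]
    have hsplit : ∑ j ∈ Finset.range (lam.rowLen 0), (d j - pcol lam j)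
        + ∑ j ∈ Finset.range (lam.rowLen 0), pcol lam j
        = ∑ j ∈ Finset.range (lam.rowLen 0), d j := by
      rw [← Finset.sum_add_distrib]
      refine Finset.sum_congr rfl fun j _ => ?_
      have := pcol_le_of_dcond hmo (hd j)
      omega
    have h4 := oddColumns_eq_sum (lam := lam)
    omega⟩
  invFun dp := ⟨fun j => dp.1 j + pcol lam j, by
    obtain ⟨d, hd, hsum⟩ := dp
    have hdc : ∀ j, Dcond lam j (d j + pcol lam j) := by
      intro j
      rw [dcond_shift hmo]
      refine ⟨by omega, ?_⟩
      rw [Nat.add_sub_cancel]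
      exact hd j
    refine ⟨hdc, ?_⟩
    show ∑ j ∈ Finset.range (lam.rowLen 0), (d j + pcol lam j) = k
    rw [Finset.sum_add_distrib]
    rw [sum_eq_sum_of_dcond hd (evenization_rowLen_le hmo), hsum]
    have h4 := oddColumns_eq_sum (lam := lam)
    omega⟩
  left_inv := by
    rintro ⟨d, hd, hsum⟩
    apply Subtype.ext
    funext j
    have := pcol_le_of_dcond hmo (hd j)
    simp only
    omega
  right_inv := by
    rintro ⟨d, hd, hsum⟩
    apply Subtype.ext
    funext j
    simp only
    omega

lemma mult_eq_zero_of_lt (hmo : lam.MildlyOdd) {k : ℕ} (hk : k < lam.oddColumns) :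
    lam.mult k = 0 := by
  rw [mult_eq_card]
  have : IsEmpty {d : ℕ → ℕ // (∀ j, Dcond lam j (d j)) ∧
      ∑ j ∈ Finset.range (lam.rowLen 0), d j = k} := by
    constructor
    rintro ⟨d, hd, hsum⟩
    have hle : ∑ j ∈ Finset.range (lam.rowLen 0), pcol lam j
        ≤ ∑ j ∈ Finset.range (lam.rowLen 0), d j :=
      Finset.sum_le_sum fun j _ => pcol_le_of_dcond hmo (hd j)
    have h4 := oddColumns_eq_sum (lam := lam)
    omega
  exact Nat.card_of_isEmpty

end transfer

section profileLemma

lemma countP_range (p : ℕ → Bool) (n : ℕ) :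
    (List.range n).countP p = ((Finset.range n).filter (fun i => p i = true)).card := by
  induction n with
  | zero => simp
  | succ n ih =>
    rw [List.range_succ, List.countP_append, Finset.range_add_one, Finset.filter_insert]
    by_cases h : p n = true
    · rw [if_pos h, Finset.card_insert_of_notMem (by simp)]
      simp [List.countP_cons, h, ih]
    · rw [if_neg h]
      simp [List.countP_cons, h, ih]

lemma count_rowLens_eq {ν : YoungDiagram} {ℓ : ℕ} (hl : 0 < ℓ) :
    ν.rowLens.count ℓ = ν.colLen (ℓ - 1) - ν.colLen ℓ := by
  rw [rowLens, List.count_eq_countP, List.countP_map, countP_range]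
  have hset : (Finset.range (ν.colLen 0)).filter
        (fun i => (((· == ℓ) ∘ ν.rowLen) i) = true)
      = Finset.Ico (ν.colLen ℓ) (ν.colLen (ℓ - 1)) := by
    ext i
    simp only [Finset.mem_filter, Finset.mem_range, Finset.mem_Ico, Function.comp_apply,
      beq_iff_eq]
    constructor
    · rintro ⟨hi, hr⟩
      constructor
      · by_contra hc
        push_neg at hc
        have := mem_iff_lt_rowLen.1 (mem_iff_lt_colLen.2 hc)
        omega
      · have hlt : ℓ - 1 < ν.rowLen i := by omega
        exact mem_iff_lt_colLen.1 (mem_iff_lt_rowLen.2 hlt)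
    · rintro ⟨h1, h2⟩
      have ha : ℓ - 1 < ν.rowLen i := mem_iff_lt_rowLen.1 (mem_iff_lt_colLen.2 h2)
      have hb : ¬ ℓ < ν.rowLen i := fun hc => by
        have := mem_iff_lt_colLen.1 (mem_iff_lt_rowLen.2 hc)
        omega
      have hc : i < ν.colLen 0 := lt_of_lt_of_le h2 (ν.colLen_anti 0 (ℓ - 1) (Nat.zero_le _))
      exact ⟨hc, by omega⟩
  rw [hset, Nat.card_Ico]

lemma hasEvenProfile_evenization {lam : YoungDiagram} (hmo : lam.MildlyOdd) :
    (evenization lam hmo).HasEvenProfile := by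
  intro h hh
  rw [profile] at hh
  obtain ⟨ℓ, hl, rfl⟩ := List.mem_map.1 hh
  have hpos : 0 < ℓ := pos_of_mem_rowLens _ ℓ (List.mem_dedup.1 hl)
  rw [count_rowLens_eq hpos, colLen_evenization, colLen_evenization, Nat.even_iff]
  have e1 := evCol_even (lam := lam) (ℓ - 1)
  have e2 := evCol_even (lam := lam) ℓ
  omega

end profileLemma




end YoungDiagram

/-- for a mildly odd diagram `lam` with `c` odd columns there is a diagram
`lamEv` with even profile, of height `2⌈ht(lam)/2⌉ - 2c`, such that
`mult lam k = mult lamEv (k - c)` for `k ≥ c` and `mult lam k = 0` for `k < c`. -/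
theorem exists_evenization (lam : YoungDiagram) (hmo : lam.MildlyOdd) :
    ∃ lamEv : YoungDiagram, lamEv.HasEvenProfile ∧
      lamEv.ht = 2 * ((lam.ht + 1) / 2) - 2 * lam.oddColumns ∧
      (∀ k : ℕ, lam.oddColumns ≤ k → lam.mult k = lamEv.mult (k - lam.oddColumns)) ∧
      (∀ k : ℕ, k < lam.oddColumns → lam.mult k = 0) := by
  refine ⟨YoungDiagram.evenization lam hmo, YoungDiagram.hasEvenProfile_evenization hmo,
    ?_, ?_, ?_⟩
  · have h1 := YoungDiagram.evCol_zero_add hmo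
    have hp : YoungDiagram.pcol lam 0 = lam.colLen 0 % 2 := rfl
    show (YoungDiagram.evenization lam hmo).colLen 0
      = 2 * ((lam.colLen 0 + 1) / 2) - 2 * lam.oddColumns
    rw [YoungDiagram.colLen_evenization]
    omega
  · intro k hk
    rw [YoungDiagram.mult_eq_card, YoungDiagram.mult_eq_card]
    exact Nat.card_congr (YoungDiagram.shiftEquiv hmo k hk)
  · intro k hk
    exact YoungDiagram.mult_eq_zero_of_lt hmo hk
end

section
/- Let λ be a Young diagram with even profile (h_0, …, h_n). Then for every k ∈ ℕ, mult(λ, k) equals the number of tuples (y_0, …, y_n) of even integers satisfying 0 ≤ y_i ≤ h_i for all i and y_0 + y_1 + … + y_n = k. -/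
open scoped Classical

namespace YoungDiagram

theorem rowLen_le_iff {μ : YoungDiagram} {i j : ℕ} : μ.rowLen i ≤ j ↔ μ.colLen j ≤ i := by
  rw [← not_lt, ← not_lt, not_iff_not, ← mem_iff_lt_rowLen, mem_iff_lt_colLen]

theorem lt_rowLen_iff_lt_colLen {μ : YoungDiagram} {i j : ℕ} :
    j < μ.rowLen i ↔ i < μ.colLen j := by
  rw [← mem_iff_lt_rowLen, mem_iff_lt_colLen]

theorem evenCols_iff_pair (μ : YoungDiagram) :
    μ.HasEvenColumns ↔ ∀ i, μ.rowLen (2 * i + 1) = μ.rowLen (2 * i) := by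
  constructor
  · intro h i
    refine le_antisymm (μ.rowLen_anti _ _ (by omega)) ?_
    by_contra hlt
    push_neg at hlt
    set j := μ.rowLen (2 * i + 1) with hj
    have h1 : μ.colLen j ≤ 2 * i + 1 := rowLen_le_iff.mp le_rfl
    have h2 : 2 * i < μ.colLen j := lt_rowLen_iff_lt_colLen.mp hlt
    obtain ⟨m, hm⟩ := h j
    omega
  · intro h j
    by_contra hodd
    rw [Nat.even_iff] at hodd
    obtain ⟨i, hi⟩ : Odd (μ.colLen j) := Nat.odd_iff.mpr (by omega)
    have h1 : j < μ.rowLen (2 * i) := lt_rowLen_iff_lt_colLen.mpr (by omega)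
    have h2 : μ.rowLen (2 * i + 1) ≤ j := rowLen_le_iff.mpr (by omega)
    rw [h i] at h2; omega

theorem rowLen_pos_iff {μ : YoungDiagram} {i : ℕ} : 0 < μ.rowLen i ↔ i < μ.colLen 0 := by
  rw [← lt_rowLen_iff_lt_colLen]

theorem le_iff_rowLen_le {μ ν : YoungDiagram} : μ ≤ ν ↔ ∀ i, μ.rowLen i ≤ ν.rowLen i := by
  constructor
  · intro h i
    rcases Nat.eq_zero_or_pos (μ.rowLen i) with h0 | h0
    · omega
    · have : (i, μ.rowLen i - 1) ∈ ν := cells_subset_iff.mpr h (mem_iff_lt_rowLen.mpr (by omega))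
      rw [mem_iff_lt_rowLen] at this
      omega
  · intro h x hx
    obtain ⟨i, j⟩ := x
    rw [mem_iff_lt_rowLen] at hx ⊢
    exact hx.trans_le (h i)

theorem eq_of_rowLen_eq {μ ν : YoungDiagram} (h : ∀ i, μ.rowLen i = ν.rowLen i) : μ = ν := by
  ext ⟨i, j⟩
  rw [mem_cells, mem_cells, mem_iff_lt_rowLen, mem_iff_lt_rowLen, h]




/-- Subdiagram of `lam` with row lengths `g`. -/
def ofSubRowLens (lam : YoungDiagram) (g : ℕ → ℕ) (hmono : Antitone g)
    (hle : ∀ i, g i ≤ lam.rowLen i) : YoungDiagram where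
  cells := lam.cells.filter fun c => c.2 < g c.1
  isLowerSet := by
    rintro ⟨i2, j2⟩ ⟨i1, j1⟩ ⟨hi : i1 ≤ i2, hj : j1 ≤ j2⟩ hcell
    simp only [Finset.coe_filter, Set.mem_setOf_eq, Finset.mem_coe, mem_cells] at hcell ⊢
    refine ⟨?_, lt_of_le_of_lt hj (hcell.2.trans_le (hmono hi))⟩
    exact mem_iff_lt_rowLen.mpr (((lt_of_le_of_lt hj (hcell.2.trans_le (hmono hi)))).trans_le (hle i1))

theorem mem_ofSubRowLens {lam : YoungDiagram} {g : ℕ → ℕ} {hmono : Antitone g}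
    {hle : ∀ i, g i ≤ lam.rowLen i} {c : ℕ × ℕ} :
    c ∈ ofSubRowLens lam g hmono hle ↔ c.2 < g c.1 := by
  change c ∈ Finset.filter _ _ ↔ _
  rw [Finset.mem_filter, mem_cells]
  constructor
  · rintro ⟨_, h⟩; exact h
  · intro h; exact ⟨mem_iff_lt_rowLen.mpr (h.trans_le (hle c.1)), h⟩

theorem rowLen_ofSubRowLens {lam : YoungDiagram} {g : ℕ → ℕ} {hmono : Antitone g}
    {hle : ∀ i, g i ≤ lam.rowLen i} (i : ℕ) :
    (ofSubRowLens lam g hmono hle).rowLen i = g i := by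
  have h : ∀ j, j < (ofSubRowLens lam g hmono hle).rowLen i ↔ j < g i := by
    intro j
    rw [← mem_iff_lt_rowLen, mem_ofSubRowLens]
  have h1 := h ((ofSubRowLens lam g hmono hle).rowLen i)
  have h2 := h (g i)
  omega





theorem mem_sdiff_iff {μ lam : YoungDiagram} {c : ℕ × ℕ} :
    c ∈ lam.cells \ μ.cells ↔ μ.rowLen c.1 ≤ c.2 ∧ c.2 < lam.rowLen c.1 := by
  rw [Finset.mem_sdiff, mem_cells, mem_cells, mem_iff_lt_rowLen, mem_iff_lt_rowLen]
  obtain ⟨i, j⟩ := c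
  simp only [not_lt]
  tauto

theorem mem_sdiff_iff'' {μ lam : YoungDiagram} {i j : ℕ} :
    (i, j) ∈ lam.cells \ μ.cells ↔ μ.rowLen i ≤ j ∧ j < lam.rowLen i := mem_sdiff_iff

theorem sdiff_eq_image {μ lam : YoungDiagram} (hμ : μ ≤ lam)
    (hpt : ∀ r, lam.rowLen r ≤ μ.rowLen r + 1) :
    lam.cells \ μ.cells =
      (((Finset.range (lam.colLen 0)).filter
        fun r => μ.rowLen r ≠ lam.rowLen r).image fun r => (r, μ.rowLen r)) := by
  have hle := le_iff_rowLen_le.mp hμ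
  ext ⟨i, j⟩
  rw [mem_sdiff_iff'', Finset.mem_image]
  constructor
  · rintro ⟨h1, h2⟩
    refine ⟨i, Finset.mem_filter.mpr ⟨Finset.mem_range.mpr ?_, by omega⟩, ?_⟩
    · rw [← rowLen_pos_iff]; omega
    · have := hpt i
      have : j = μ.rowLen i := by omega
      exact Prod.ext rfl this.symm
  · rintro ⟨r, hr, heq⟩
    obtain ⟨rfl, rfl⟩ : r = i ∧ μ.rowLen r = j := by
      exact ⟨(Prod.ext_iff.mp heq).1, (Prod.ext_iff.mp heq).2⟩
    rw [Finset.mem_filter] at hr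
    have := hle r
    exact ⟨le_rfl, by omega⟩

theorem isVerticalStrip_iff {μ lam : YoungDiagram} (hμ : μ ≤ lam) {k : ℕ} :
    IsVerticalStrip μ lam k ↔ (∀ r, lam.rowLen r ≤ μ.rowLen r + 1) ∧
      ((Finset.range (lam.colLen 0)).filter
        fun r => μ.rowLen r ≠ lam.rowLen r).card = k := by
  have hle := le_iff_rowLen_le.mp hμ
  have hcard : ∀ (hpt : ∀ r, lam.rowLen r ≤ μ.rowLen r + 1),
      (lam.cells \ μ.cells).card = ((Finset.range (lam.colLen 0)).filter
        fun r => μ.rowLen r ≠ lam.rowLen r).card := by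
    intro hpt
    rw [sdiff_eq_image hμ hpt, Finset.card_image_of_injective]
    intro a b hab
    exact (Prod.ext_iff.mp hab).1
  constructor
  · rintro ⟨-, hcardk, hrow⟩
    have hpt : ∀ r, lam.rowLen r ≤ μ.rowLen r + 1 := by
      intro r
      by_contra hcon
      push_neg at hcon
      have m1 : (r, μ.rowLen r) ∈ lam.cells \ μ.cells := mem_sdiff_iff''.mpr ⟨le_rfl, by omega⟩
      have m2 : (r, μ.rowLen r + 1) ∈ lam.cells \ μ.cells :=
        mem_sdiff_iff''.mpr ⟨by omega, by omega⟩
      have := hrow _ m1 _ m2 rfl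
      simp at this
    exact ⟨hpt, by rw [← hcard hpt]; exact hcardk⟩
  · rintro ⟨hpt, hk⟩
    refine ⟨hμ, by rw [hcard hpt]; exact hk, ?_⟩
    rintro ⟨i1, j1⟩ hc₁ ⟨i2, j2⟩ hc₂ h12
    obtain rfl : i1 = i2 := h12
    rw [mem_sdiff_iff''] at hc₁ hc₂
    have h1 := hpt i1
    have : j1 = j2 := by omega
    exact Prod.ext rfl this



theorem count_rowLens (lam : YoungDiagram) (v : ℕ) :
    lam.rowLens.count v =
      ((Finset.range (lam.colLen 0)).filter fun r => lam.rowLen r = v).card := by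
  classical
  rw [rowLens]
  rw [List.count_eq_countP]
  rw [List.countP_map]
  rw [List.countP_eq_length_filter]
  rw [← List.toFinset_card_of_nodup (List.nodup_range.filter _)]
  rw [List.toFinset_filter]
  congr 1
  ext r
  rw [Finset.mem_filter, Finset.mem_filter, List.mem_toFinset, List.mem_range, Finset.mem_range]
  simp only [Function.comp, beq_iff_eq]



theorem pair_even_card (F : Finset ℕ) (hF : ∀ j, 2 * j ∈ F ↔ 2 * j + 1 ∈ F) :
    Even F.card := by
  classical
  have hsplit := Finset.card_filter_add_card_filter_not (s := F) (p := fun r => Even r)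
  have hbij : (F.filter fun r => Even r).card = (F.filter fun r => ¬ Even r).card := by
    apply Finset.card_bij (fun a _ => a + 1)
    · intro a ha
      rw [Finset.mem_filter] at ha ⊢
      obtain ⟨haF, j, hj⟩ := ha
      have : a = 2 * j := by omega
      subst this
      exact ⟨(hF j).mp haF, Nat.not_even_iff.mpr (by omega)⟩
    · intro a _ b _ h
      omega
    · intro b hb
      rw [Finset.mem_filter] at hb
      obtain ⟨hbF, hodd⟩ := hb
      rw [Nat.not_even_iff] at hodd
      refine ⟨b - 1, Finset.mem_filter.mpr ⟨?_, ?_⟩, by omega⟩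
      · have : b - 1 = 2 * ((b-1)/2) := by omega
        rw [this]
        exact (hF _).mpr (by rw [← this, Nat.sub_add_cancel (by omega)]; exact hbF)
      · exact Nat.even_iff.mpr (by omega)
  have h2 : F.card = (F.filter fun r => ¬ Even r).card + (F.filter fun r => ¬ Even r).card := by
    omega
  exact h2 ▸ Even.add_self _

theorem even_card_filter_range {N : ℕ} (hN : Even N) (Q : ℕ → Prop) [DecidablePred Q]
    (hQ : ∀ j, Q (2 * j) ↔ Q (2 * j + 1)) :
    Even ((Finset.range N).filter Q).card := by
  classical
  apply pair_even_card
  intro j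
  simp only [Finset.mem_filter, Finset.mem_range]
  obtain ⟨m, hm⟩ := hN
  constructor
  · rintro ⟨h1, h2⟩
    exact ⟨by omega, (hQ j).mp h2⟩
  · rintro ⟨h1, h2⟩
    exact ⟨by omega, (hQ j).mpr h2⟩

theorem card_fiberwise (lam : YoungDiagram) (P : ℕ → Prop) [DecidablePred P] :
    ((Finset.range (lam.colLen 0)).filter P).card =
      ∑ v ∈ lam.rowLens.toFinset,
        ((Finset.range (lam.colLen 0)).filter fun r => lam.rowLen r = v ∧ P r).card := by
  classical
  rw [Finset.card_eq_sum_card_fiberwise (f := lam.rowLen) (t := lam.rowLens.toFinset)]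
  · apply Finset.sum_congr rfl
    intro v _
    congr 1
    rw [Finset.filter_filter]
    congr 1
    ext r
    tauto
  · intro r hr
    rw [Finset.mem_coe, Finset.mem_filter, Finset.mem_range] at hr
    rw [Finset.mem_coe, List.mem_toFinset, rowLens, List.mem_map]
    exact ⟨r, List.mem_range.mpr hr.1, rfl⟩





theorem even_count (lam : YoungDiagram) (hep : lam.HasEvenProfile) (v : ℕ) :
    Even (lam.rowLens.count v) := by
  classical
  by_cases hv : v ∈ lam.rowLens
  · exact hep _ (List.mem_map.mpr ⟨v, List.mem_dedup.mpr hv, rfl⟩)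
  · rw [List.count_eq_zero.mpr hv]
    exact Even.zero

theorem colLen_eq_card_filter (lam : YoungDiagram) (j : ℕ) :
    lam.colLen j = ((Finset.range (lam.colLen 0)).filter fun r => j < lam.rowLen r).card := by
  have hsub : lam.colLen j ≤ lam.colLen 0 := lam.colLen_anti 0 j (Nat.zero_le _)
  have : (Finset.range (lam.colLen 0)).filter (fun r => j < lam.rowLen r) =
      Finset.range (lam.colLen j) := by
    ext r
    rw [Finset.mem_filter, Finset.mem_range, Finset.mem_range, lt_rowLen_iff_lt_colLen]
    constructor
    · rintro ⟨_, h⟩; exact h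
    · intro h; exact ⟨lt_of_lt_of_le h hsub, h⟩
  rw [this, Finset.card_range]

theorem hasEvenColumns_of_evenProfile (lam : YoungDiagram) (hep : lam.HasEvenProfile) :
    lam.HasEvenColumns := by
  classical
  intro j
  rw [colLen_eq_card_filter, card_fiberwise]
  apply Finset.even_sum
  intro v hv
  by_cases hjv : j < v
  · have : ((Finset.range (lam.colLen 0)).filter fun r => lam.rowLen r = v ∧ j < lam.rowLen r)
        = (Finset.range (lam.colLen 0)).filter fun r => lam.rowLen r = v := by
      congr 1
      ext r
      constructor
      · rintro ⟨h, _⟩; exact h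
      · intro h; exact ⟨h, h ▸ hjv⟩
    rw [this, ← count_rowLens]
    exact even_count lam hep v
  · have : ((Finset.range (lam.colLen 0)).filter fun r => lam.rowLen r = v ∧ j < lam.rowLen r)
        = ∅ := by
      rw [Finset.filter_eq_empty_iff]
      rintro r - ⟨h1, h2⟩
      omega
    rw [this]
    exact Even.zero

theorem rowLen_pair (lam : YoungDiagram) (hep : lam.HasEvenProfile) (i : ℕ) :
    lam.rowLen (2 * i + 1) = lam.rowLen (2 * i) :=
  (evenCols_iff_pair lam).mp (hasEvenColumns_of_evenProfile lam hep) i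

theorem colLen_zero_even (lam : YoungDiagram) (hep : lam.HasEvenProfile) :
    Even (lam.colLen 0) := hasEvenColumns_of_evenProfile lam hep 0


noncomputable def btm (lam : YoungDiagram) (r : ℕ) : ℕ :=
  ((Finset.Ico (r + 1) (lam.colLen 0)).filter fun r' => lam.rowLen r' = lam.rowLen r).card

theorem btm_congr (lam : YoungDiagram) {r v : ℕ} (h : lam.rowLen r = v) :
    btm lam r = ((Finset.Ico (r + 1) (lam.colLen 0)).filter fun r' => lam.rowLen r' = v).card := by
  rw [btm, h]

theorem btm_lt_count (lam : YoungDiagram) {r : ℕ} (hr : r < lam.colLen 0) :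
    btm lam r <
      ((Finset.range (lam.colLen 0)).filter fun r' => lam.rowLen r' = lam.rowLen r).card := by
  apply Finset.card_lt_card
  constructor
  · intro x hx
    rw [Finset.mem_filter] at hx ⊢
    rw [Finset.mem_Ico] at hx
    exact ⟨Finset.mem_range.mpr (by omega), hx.2⟩
  · intro hsub
    have : r ∈ (Finset.range (lam.colLen 0)).filter fun r' => lam.rowLen r' = lam.rowLen r :=
      Finset.mem_filter.mpr ⟨Finset.mem_range.mpr hr, rfl⟩
    have := hsub this
    rw [Finset.mem_filter, Finset.mem_Ico] at this
    omega

theorem btm_succ (lam : YoungDiagram) {r : ℕ} (h : lam.rowLen (r + 1) = lam.rowLen r)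
    (h2 : 0 < lam.rowLen r) : btm lam r = btm lam (r + 1) + 1 := by
  have hN : r + 1 < lam.colLen 0 := rowLen_pos_iff.mp (h ▸ h2)
  have hnm : r + 1 ∉ (Finset.Ico (r + 1).succ (lam.colLen 0)).filter
      fun r' => lam.rowLen r' = lam.rowLen r := by
    intro hmem
    rw [Finset.mem_filter, Finset.mem_Ico] at hmem
    omega
  rw [btm_congr lam h, btm_congr lam (rfl : lam.rowLen r = lam.rowLen r),
    ← Finset.insert_Ico_add_one_left_eq_Ico hN, Finset.filter_insert, if_pos h,
    Finset.card_insert_of_notMem (show r + 1 ∉ (Finset.Ico (r + 1 + 1) (lam.colLen 0)).filter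
      fun r' => lam.rowLen r' = lam.rowLen r from hnm)]

theorem btm_eq_zero (lam : YoungDiagram) {r : ℕ} (h : lam.rowLen (r + 1) ≠ lam.rowLen r) :
    btm lam r = 0 := by
  rw [btm, Finset.card_eq_zero, Finset.filter_eq_empty_iff]
  intro r' hr'
  rw [Finset.mem_Ico] at hr'
  have h1 : lam.rowLen r' ≤ lam.rowLen (r + 1) := lam.rowLen_anti _ _ hr'.1
  have h2 : lam.rowLen (r + 1) ≤ lam.rowLen r := lam.rowLen_anti _ _ (by omega)
  omega

theorem btm_even (lam : YoungDiagram) (hep : lam.HasEvenProfile) (i : ℕ) :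
    Even (btm lam (2 * i + 1)) := by
  classical
  have hrw : ((Finset.Ico (2 * i + 1 + 1) (lam.colLen 0)).filter
        fun r' => lam.rowLen r' = lam.rowLen (2 * i + 1)) =
      (Finset.range (lam.colLen 0)).filter
        fun r' => 2 * i + 2 ≤ r' ∧ lam.rowLen r' = lam.rowLen (2 * i + 1) := by
    ext r'
    rw [Finset.mem_filter, Finset.mem_filter, Finset.mem_Ico, Finset.mem_range]
    tauto
  rw [btm, hrw]
  apply even_card_filter_range (colLen_zero_even lam hep)
  intro j
  have hp := rowLen_pair lam hep j
  constructor
  · rintro ⟨h1, h2⟩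
    exact ⟨by omega, by omega⟩
  · rintro ⟨h1, h2⟩
    exact ⟨by omega, by omega⟩

theorem btm_strict_anti (lam : YoungDiagram) {v r1 r2 : ℕ} (h1 : lam.rowLen r1 = v)
    (h2 : lam.rowLen r2 = v) (h12 : r1 < r2) (hr2 : r2 < lam.colLen 0) :
    btm lam r2 < btm lam r1 := by
  rw [btm_congr lam h1, btm_congr lam h2]
  apply Finset.card_lt_card
  constructor
  · intro x hx
    rw [Finset.mem_filter] at hx ⊢
    rw [Finset.mem_Ico] at hx
    exact ⟨Finset.mem_Ico.mpr ⟨by omega, hx.1.2⟩, hx.2⟩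
  · intro hsub
    have : r2 ∈ (Finset.Ico (r1 + 1) (lam.colLen 0)).filter fun r' => lam.rowLen r' = v :=
      Finset.mem_filter.mpr ⟨Finset.mem_Ico.mpr ⟨by omega, hr2⟩, h2⟩
    have := hsub this
    rw [Finset.mem_filter, Finset.mem_Ico] at this
    omega

theorem card_filter_btm (lam : YoungDiagram) (v c : ℕ)
    (hc : c ≤ ((Finset.range (lam.colLen 0)).filter fun r => lam.rowLen r = v).card) :
    ((Finset.range (lam.colLen 0)).filter
      fun r => lam.rowLen r = v ∧ btm lam r < c).card = c := by
  classical
  set B := (Finset.range (lam.colLen 0)).filter fun r => lam.rowLen r = v with hB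
  have hBmem : ∀ r ∈ B, r < lam.colLen 0 ∧ lam.rowLen r = v := by
    intro r hr
    rw [hB, Finset.mem_filter, Finset.mem_range] at hr
    exact hr
  have hinj : Set.InjOn (btm lam) B := by
    intro r1 hr1 r2 hr2 heq
    by_contra hne
    rcases Nat.lt_or_ge r1 r2 with h | h
    · have := btm_strict_anti lam (hBmem r1 hr1).2 (hBmem r2 hr2).2 h (hBmem r2 hr2).1
      omega
    · have h' : r2 < r1 := by omega
      have := btm_strict_anti lam (hBmem r2 hr2).2 (hBmem r1 hr1).2 h' (hBmem r1 hr1).1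
      omega
  have himage : B.image (btm lam) = Finset.range B.card := by
    apply Finset.eq_of_subset_of_card_le
    · intro x hx
      rw [Finset.mem_image] at hx
      obtain ⟨r, hr, rfl⟩ := hx
      rw [Finset.mem_range]
      have := btm_lt_count lam (hBmem r hr).1
      rw [(hBmem r hr).2] at this
      exact this
    · rw [Finset.card_range, Finset.card_image_of_injOn hinj]
  have hsplit : ((Finset.range (lam.colLen 0)).filter
      fun r => lam.rowLen r = v ∧ btm lam r < c) = B.filter fun r => btm lam r < c := by
    rw [hB, Finset.filter_filter]
  rw [hsplit]
  have hinj2 : Set.InjOn (btm lam) (B.filter fun r => btm lam r < c) :=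
    hinj.mono (by intro x hx; exact Finset.mem_of_mem_filter _ hx)
  rw [← Finset.card_image_of_injOn hinj2]
  have : (B.filter fun r => btm lam r < c).image (btm lam) =
      (B.image (btm lam)).filter fun x => x < c := by
    rw [Finset.filter_image]
  rw [this, himage]
  have : (Finset.range B.card).filter (fun x => x < c) = Finset.range c := by
    ext x
    rw [Finset.mem_filter, Finset.mem_range, Finset.mem_range]
    omega
  rw [this, Finset.card_range]


theorem prop_of_mu (lam : YoungDiagram) (k : ℕ) (μ : YoungDiagram)
    (h : μ ≤ lam ∧ μ.HasEvenColumns ∧ IsVerticalStrip μ lam k) :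
    Antitone μ.rowLen ∧ (∀ r, μ.rowLen r ≤ lam.rowLen r) ∧
      (∀ r, lam.rowLen r ≤ μ.rowLen r + 1) ∧
      (∀ i, μ.rowLen (2 * i + 1) = μ.rowLen (2 * i)) ∧
      ((Finset.range (lam.colLen 0)).filter fun r => μ.rowLen r ≠ lam.rowLen r).card = k := by
  obtain ⟨hle, hec, hvs⟩ := h
  exact ⟨fun i j hij => μ.rowLen_anti i j hij, le_iff_rowLen_le.mp hle,
    ((isVerticalStrip_iff hle).mp hvs).1, (evenCols_iff_pair μ).mp hec,
    ((isVerticalStrip_iff hle).mp hvs).2⟩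

theorem prop_of_g (lam : YoungDiagram) (k : ℕ) (g : ℕ → ℕ)
    (h : Antitone g ∧ (∀ r, g r ≤ lam.rowLen r) ∧ (∀ r, lam.rowLen r ≤ g r + 1) ∧
      (∀ i, g (2 * i + 1) = g (2 * i)) ∧
      ((Finset.range (lam.colLen 0)).filter fun r => g r ≠ lam.rowLen r).card = k) :
    ofSubRowLens lam g h.1 h.2.1 ≤ lam ∧ (ofSubRowLens lam g h.1 h.2.1).HasEvenColumns ∧
      IsVerticalStrip (ofSubRowLens lam g h.1 h.2.1) lam k := by
  obtain ⟨hanti, hle, hpt, hpair, hcard⟩ := h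
  have hμle : ofSubRowLens lam g hanti hle ≤ lam :=
    le_iff_rowLen_le.mpr fun i => (rowLen_ofSubRowLens i) ▸ hle i
  refine ⟨hμle, ?_, ?_⟩
  · refine (evenCols_iff_pair _).mpr fun i => ?_
    rw [rowLen_ofSubRowLens, rowLen_ofSubRowLens]
    exact hpair i
  · refine (isVerticalStrip_iff hμle).mpr ⟨fun r => ?_, ?_⟩
    · rw [rowLen_ofSubRowLens]; exact hpt r
    · rw [← hcard]
      congr 1
      ext r
      rw [Finset.mem_filter, Finset.mem_filter, rowLen_ofSubRowLens]

noncomputable def equivG (lam : YoungDiagram) (k : ℕ) :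
    {μ : YoungDiagram // μ ≤ lam ∧ μ.HasEvenColumns ∧ IsVerticalStrip μ lam k} ≃
    {g : ℕ → ℕ // Antitone g ∧ (∀ r, g r ≤ lam.rowLen r) ∧ (∀ r, lam.rowLen r ≤ g r + 1) ∧
      (∀ i, g (2 * i + 1) = g (2 * i)) ∧
      ((Finset.range (lam.colLen 0)).filter fun r => g r ≠ lam.rowLen r).card = k} where
  toFun m := ⟨m.1.rowLen, prop_of_mu lam k m.1 m.2⟩
  invFun gp := ⟨ofSubRowLens lam gp.1 gp.2.1 gp.2.2.1, prop_of_g lam k gp.1 gp.2⟩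
  left_inv m := by
    apply Subtype.ext
    apply eq_of_rowLen_eq
    intro i
    show (ofSubRowLens lam (m.1.rowLen) (prop_of_mu lam k m.1 m.2).1
      (prop_of_mu lam k m.1 m.2).2.1).rowLen i = m.1.rowLen i
    exact rowLen_ofSubRowLens i
  right_inv gp := by
    apply Subtype.ext
    funext i
    show (ofSubRowLens lam gp.1 gp.2.1 gp.2.2.1).rowLen i = gp.1 i
    exact rowLen_ofSubRowLens i

theorem profile_length (lam : YoungDiagram) :
    lam.profile.length = lam.rowLens.dedup.length := List.length_map _

noncomputable def dval (lam : YoungDiagram) (i : Fin lam.profile.length) : ℕ :=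
  lam.rowLens.dedup.get (Fin.cast (profile_length lam) i)

theorem dval_mem (lam : YoungDiagram) (i : Fin lam.profile.length) :
    dval lam i ∈ lam.rowLens.dedup := List.get_mem _ _

theorem dval_pos (lam : YoungDiagram) (i : Fin lam.profile.length) : 0 < dval lam i :=
  lam.pos_of_mem_rowLens _ (List.mem_dedup.mp (dval_mem lam i))

theorem dval_inj (lam : YoungDiagram) {i j : Fin lam.profile.length}
    (h : dval lam i = dval lam j) : i = j := by
  have := (List.Nodup.get_inj_iff (List.nodup_dedup _)).mp h
  exact Fin.ext (by simpa using congrArg Fin.val this)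

theorem profile_get (lam : YoungDiagram) (i : Fin lam.profile.length) :
    lam.profile.get i = lam.rowLens.count (dval lam i) := by
  unfold profile dval
  exact List.getElem_map _

theorem mem_dedup_of_lt (lam : YoungDiagram) {r : ℕ} (hr : r < lam.colLen 0) :
    lam.rowLen r ∈ lam.rowLens.dedup :=
  List.mem_dedup.mpr (by rw [rowLens]; exact List.mem_map.mpr ⟨r, List.mem_range.mpr hr, rfl⟩)

noncomputable def yval (lam : YoungDiagram) (y : Fin lam.profile.length → ℕ) (v : ℕ) : ℕ :=
  if h : v ∈ lam.rowLens.dedup then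
    y ⟨lam.rowLens.dedup.idxOf v, by
      rw [profile_length]; exact List.idxOf_lt_length_iff.mpr h⟩
  else 0

theorem yval_dval (lam : YoungDiagram) (y : Fin lam.profile.length → ℕ)
    (i : Fin lam.profile.length) : yval lam y (dval lam i) = y i := by
  rw [yval, dif_pos (dval_mem lam i)]
  congr 1
  apply Fin.ext
  show (lam.rowLens.dedup.idxOf (dval lam i) : ℕ) = i
  rw [dval, List.get_idxOf (List.nodup_dedup _)]
  rfl

theorem yval_indexOf (lam : YoungDiagram) (y : Fin lam.profile.length → ℕ) {v : ℕ}
    (h : v ∈ lam.rowLens.dedup) :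
    yval lam y v = y ⟨lam.rowLens.dedup.idxOf v, by
      rw [profile_length]; exact List.idxOf_lt_length_iff.mpr h⟩ := dif_pos h

theorem yval_zero (lam : YoungDiagram) (y : Fin lam.profile.length → ℕ) :
    yval lam y 0 = 0 := by
  rw [yval, dif_neg]
  intro h
  exact absurd (lam.pos_of_mem_rowLens _ (List.mem_dedup.mp h)) (by omega)

noncomputable def Fmap (lam : YoungDiagram) (g : ℕ → ℕ) : Fin lam.profile.length → ℕ :=
  fun i => ((Finset.range (lam.colLen 0)).filter
    fun r => lam.rowLen r = dval lam i ∧ g r ≠ lam.rowLen r).card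

noncomputable def Gmap (lam : YoungDiagram) (y : Fin lam.profile.length → ℕ) : ℕ → ℕ :=
  fun r => lam.rowLen r - if btm lam r < yval lam y (lam.rowLen r) then 1 else 0

theorem sum_Fmap (lam : YoungDiagram) (g : ℕ → ℕ) :
    ∑ i, Fmap lam g i =
      ((Finset.range (lam.colLen 0)).filter fun r => g r ≠ lam.rowLen r).card := by
  classical
  rw [card_fiberwise lam (fun r => g r ≠ lam.rowLen r)]
  rw [show lam.rowLens.toFinset = lam.rowLens.dedup.toFinset from by
    ext v; simp [List.mem_toFinset, List.mem_dedup]]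
  apply Finset.sum_bij (i := fun (i : Fin lam.profile.length) _ => dval lam i)
  · intro a _
    exact List.mem_toFinset.mpr (dval_mem lam a)
  · intro a _ b _ h
    exact dval_inj lam h
  · intro v hv
    have hv' := List.mem_toFinset.mp hv
    refine ⟨⟨lam.rowLens.dedup.idxOf v, by
      rw [profile_length]; exact List.idxOf_lt_length_iff.mpr hv'⟩, Finset.mem_univ _, ?_⟩
    rw [dval]
    exact List.idxOf_get _
  · intro a _
    rfl

theorem le_Gmap (lam : YoungDiagram) (y : Fin lam.profile.length → ℕ) (r : ℕ) :
    lam.rowLen r ≤ Gmap lam y r + 1 := by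
  unfold Gmap; split <;> omega

theorem Gmap_anti (lam : YoungDiagram) (y : Fin lam.profile.length → ℕ) :
    Antitone (Gmap lam y) := by
  apply antitone_nat_of_succ_le
  intro r
  have hle : lam.rowLen (r + 1) ≤ lam.rowLen r := lam.rowLen_anti r (r + 1) (by omega)
  rcases eq_or_lt_of_le hle with heq | hlt
  · rcases Nat.eq_zero_or_pos (lam.rowLen r) with h0 | h0
    · have a1 : Gmap lam y (r + 1) ≤ lam.rowLen (r + 1) := Nat.sub_le _ _
      have a2 : Gmap lam y r ≤ lam.rowLen r := Nat.sub_le _ _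
      omega
    · have hsucc := btm_succ lam heq h0
      unfold Gmap
      rw [heq]
      split_ifs <;> omega
  · have a1 : Gmap lam y (r + 1) ≤ lam.rowLen (r + 1) := Nat.sub_le _ _
    unfold Gmap
    split_ifs <;> omega

theorem Gmap_pair (lam : YoungDiagram) (hep : lam.HasEvenProfile)
    (y : Fin lam.profile.length → ℕ) (hy : ∀ i, Even (y i)) (i : ℕ) :
    Gmap lam y (2 * i + 1) = Gmap lam y (2 * i) := by
  have hp := rowLen_pair lam hep i
  rcases Nat.eq_zero_or_pos (lam.rowLen (2 * i)) with h0 | h0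
  · have a1 : Gmap lam y (2 * i + 1) ≤ lam.rowLen (2 * i + 1) := Nat.sub_le _ _
    have a2 : Gmap lam y (2 * i) ≤ lam.rowLen (2 * i) := Nat.sub_le _ _
    omega
  · have hsucc := btm_succ lam hp h0
    have heven := btm_even lam hep i
    have h2iN : 2 * i < lam.colLen 0 := rowLen_pos_iff.mp h0
    have hvmem : lam.rowLen (2 * i) ∈ lam.rowLens.dedup := mem_dedup_of_lt lam h2iN
    have hcEven : Even (yval lam y (lam.rowLen (2 * i))) := by
      rw [yval_indexOf lam y hvmem]; exact hy _
    unfold Gmap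
    rw [hp]
    obtain ⟨a, ha⟩ := hcEven
    obtain ⟨b, hb⟩ := heven
    split_ifs <;> omega

theorem Fmap_Gmap (lam : YoungDiagram) (y : Fin lam.profile.length → ℕ)
    (hy : ∀ i, y i ≤ lam.profile.get i) : Fmap lam (Gmap lam y) = y := by
  classical
  funext i
  have hvpos := dval_pos lam i
  have hyv := yval_dval lam y i
  have hbound : y i ≤ ((Finset.range (lam.colLen 0)).filter
      fun r => lam.rowLen r = dval lam i).card := by
    have := hy i
    rw [profile_get, count_rowLens] at this
    exact this
  rw [Fmap]
  have hfeq : ((Finset.range (lam.colLen 0)).filter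
        fun r => lam.rowLen r = dval lam i ∧ Gmap lam y r ≠ lam.rowLen r) =
      ((Finset.range (lam.colLen 0)).filter
        fun r => lam.rowLen r = dval lam i ∧ btm lam r < y i) := by
    apply Finset.filter_congr
    intro r _
    constructor
    · rintro ⟨h1, h2⟩
      refine ⟨h1, ?_⟩
      unfold Gmap at h2
      rw [h1, hyv] at h2
      by_contra hc
      rw [if_neg hc] at h2
      omega
    · rintro ⟨h1, h2⟩
      refine ⟨h1, ?_⟩
      unfold Gmap
      rw [h1, hyv, if_pos h2]
      omega
  rw [hfeq, card_filter_btm lam (dval lam i) (y i) hbound]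

theorem Gmap_Fmap (lam : YoungDiagram) (g : ℕ → ℕ) (hanti : Antitone g)
    (hle : ∀ r, g r ≤ lam.rowLen r) (hpt : ∀ r, lam.rowLen r ≤ g r + 1) :
    Gmap lam (Fmap lam g) = g := by
  classical
  funext r
  by_cases hrN : r < lam.colLen 0
  · have hv : lam.rowLen r ∈ lam.rowLens.dedup := mem_dedup_of_lt lam hrN
    have hvpos : 0 < lam.rowLen r := rowLen_pos_iff.mpr hrN
    have hval : yval lam (Fmap lam g) (lam.rowLen r) =
        ((Finset.range (lam.colLen 0)).filter
          fun r' => lam.rowLen r' = lam.rowLen r ∧ g r' ≠ lam.rowLen r').card := by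
      rw [yval_indexOf lam _ hv, Fmap]
      have hd : dval lam ⟨lam.rowLens.dedup.idxOf (lam.rowLen r), by
          rw [profile_length]; exact List.idxOf_lt_length_iff.mpr hv⟩ = lam.rowLen r := by
        rw [dval]
        exact List.idxOf_get _
      rw [hd]
    have hiff : btm lam r < ((Finset.range (lam.colLen 0)).filter
        fun r' => lam.rowLen r' = lam.rowLen r ∧ g r' ≠ lam.rowLen r').card ↔
        g r ≠ lam.rowLen r := by
      constructor
      · intro h
        by_contra hg
        have hsub : ((Finset.range (lam.colLen 0)).filter
            fun r' => lam.rowLen r' = lam.rowLen r ∧ g r' ≠ lam.rowLen r') ⊆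
            (Finset.Ico (r + 1) (lam.colLen 0)).filter
              fun r' => lam.rowLen r' = lam.rowLen r := by
          intro r' hr'
          rw [Finset.mem_filter, Finset.mem_range] at hr'
          obtain ⟨hr'N, hLr', hgr'⟩ := hr'
          have hgr'lt : g r' < lam.rowLen r' := lt_of_le_of_ne (hle r') hgr'
          refine Finset.mem_filter.mpr ⟨Finset.mem_Ico.mpr ⟨?_, hr'N⟩, hLr'⟩
          by_contra hrr
          push_neg at hrr
          have := hanti (show r' ≤ r by omega)
          omega
        have hcard := Finset.card_le_card hsub
        unfold btm at *
        omega
      · intro hg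
        have hrF : r ∈ (Finset.range (lam.colLen 0)).filter
            fun r' => lam.rowLen r' = lam.rowLen r ∧ g r' ≠ lam.rowLen r' :=
          Finset.mem_filter.mpr ⟨Finset.mem_range.mpr hrN, rfl, hg⟩
        have hsub : insert r ((Finset.Ico (r + 1) (lam.colLen 0)).filter
            fun r' => lam.rowLen r' = lam.rowLen r) ⊆
            (Finset.range (lam.colLen 0)).filter
              fun r' => lam.rowLen r' = lam.rowLen r ∧ g r' ≠ lam.rowLen r' := by
          intro r' hr'
          rcases Finset.mem_insert.mp hr' with rfl | hr'
          · exact hrF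
          · rw [Finset.mem_filter, Finset.mem_Ico] at hr'
            obtain ⟨⟨hlo, hhi⟩, hLr'⟩ := hr'
            have h1 : g r' ≤ g r := hanti (by omega)
            have h2 : g r < lam.rowLen r := lt_of_le_of_ne (hle r) hg
            refine Finset.mem_filter.mpr ⟨Finset.mem_range.mpr hhi, hLr', by omega⟩
        have hcard := Finset.card_le_card hsub
        rw [Finset.card_insert_of_notMem (by
          intro hmem
          rw [Finset.mem_filter, Finset.mem_Ico] at hmem
          omega)] at hcard
        unfold btm
        omega
    unfold Gmap
    rw [hval]
    have h1 := hle r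
    have h2 := hpt r
    split_ifs with h
    · have := hiff.mp h
      omega
    · have : ¬ g r ≠ lam.rowLen r := fun hc => h (hiff.mpr hc)
      omega
  · have h0 : lam.rowLen r = 0 := by
      have := rowLen_pos_iff (μ := lam) (i := r)
      omega
    have a1 : Gmap lam (Fmap lam g) r ≤ lam.rowLen r := Nat.sub_le _ _
    have a2 := hle r
    omega

theorem Fmap_even (lam : YoungDiagram) (hep : lam.HasEvenProfile) (g : ℕ → ℕ)
    (hgpair : ∀ i, g (2 * i + 1) = g (2 * i)) (i : Fin lam.profile.length) :
    Even (Fmap lam g i) := by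
  rw [Fmap]
  apply even_card_filter_range (colLen_zero_even lam hep)
  intro j
  have hp := rowLen_pair lam hep j
  have hq := hgpair j
  constructor
  · rintro ⟨h1, h2⟩
    exact ⟨by omega, by omega⟩
  · rintro ⟨h1, h2⟩
    exact ⟨by omega, by omega⟩

theorem Fmap_le (lam : YoungDiagram) (g : ℕ → ℕ) (i : Fin lam.profile.length) :
    Fmap lam g i ≤ lam.profile.get i := by
  rw [profile_get, count_rowLens]
  apply Finset.card_le_card
  intro r hr
  rw [Finset.mem_filter] at hr ⊢
  exact ⟨hr.1, hr.2.1⟩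

noncomputable def equivY (lam : YoungDiagram) (hep : lam.HasEvenProfile) (k : ℕ) :
    {g : ℕ → ℕ // Antitone g ∧ (∀ r, g r ≤ lam.rowLen r) ∧ (∀ r, lam.rowLen r ≤ g r + 1) ∧
      (∀ i, g (2 * i + 1) = g (2 * i)) ∧
      ((Finset.range (lam.colLen 0)).filter fun r => g r ≠ lam.rowLen r).card = k} ≃
    {y : Fin lam.profile.length → ℕ //
      (∀ i, Even (y i) ∧ y i ≤ lam.profile.get i) ∧ ∑ i, y i = k} where
  toFun gp := ⟨Fmap lam gp.1,
    ⟨fun i => ⟨Fmap_even lam hep gp.1 gp.2.2.2.2.1 i, Fmap_le lam gp.1 i⟩, by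
      rw [sum_Fmap]; exact gp.2.2.2.2.2⟩⟩
  invFun yp := ⟨Gmap lam yp.1,
    ⟨Gmap_anti lam yp.1, fun r => Nat.sub_le _ _, le_Gmap lam yp.1,
      Gmap_pair lam hep yp.1 (fun i => (yp.2.1 i).1), by
        have h1 := sum_Fmap lam (Gmap lam yp.1)
        rw [Fmap_Gmap lam yp.1 (fun i => (yp.2.1 i).2)] at h1
        rw [← h1]; exact yp.2.2⟩⟩
  left_inv gp := Subtype.ext (Gmap_Fmap lam gp.1 gp.2.1 gp.2.2.1 gp.2.2.2.1)
  right_inv yp := Subtype.ext (Fmap_Gmap lam yp.1 (fun i => (yp.2.1 i).2))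

end YoungDiagram

/-- for a diagram with even profile `(h₀, …, hₙ)`, `mult lam k` equals the
number of tuples `(y₀, …, yₙ)` of even integers with `0 ≤ yᵢ ≤ hᵢ` and `∑ yᵢ = k`. -/
theorem mult_eq_card_even_tuples (lam : YoungDiagram) (hep : lam.HasEvenProfile) (k : ℕ) :
    lam.mult k =
      Nat.card {y : Fin lam.profile.length → ℕ //
        (∀ i, Even (y i) ∧ y i ≤ lam.profile.get i) ∧ ∑ i, y i = k} := by
  unfold YoungDiagram.mult
  exact Nat.card_congr ((YoungDiagram.equivG lam k).trans (YoungDiagram.equivY lam hep k))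
end

section
/- Let λ be a Young diagram with even profile (h_0, …, h_n), and suppose that for some index j one has h_j > Σ_{i ≠ j} h_i. Then the function k ↦ mult(λ, k) takes the same value at all even integers k in the interval [Σ_{i ≠ j} h_i, h_j]. -/
open scoped Classical

namespace YoungDiagram

section Aux

variable (lam : YoungDiagram)

/-- Generic: identify `colLen` from a membership criterion. -/
lemma colLen_eq_of_iff {μ : YoungDiagram} {x m : ℕ}
    (h : ∀ r, (r, x) ∈ μ ↔ r < m) : μ.colLen x = m := by
  rcases Nat.lt_trichotomy (μ.colLen x) m with hlt | he | hgt
  · have := (h (μ.colLen x)).mpr hlt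
    rw [mem_iff_lt_colLen] at this; omega
  · exact he
  · have := (h m).mp (mem_iff_lt_colLen.mpr hgt)
    omega

lemma colLen_eq_zero_of (x : ℕ) (hx : lam.rowLen 0 ≤ x) : lam.colLen x = 0 := by
  apply colLen_eq_of_iff
  intro r
  constructor
  · intro hr
    have : (0, x) ∈ lam := lam.up_left_mem (Nat.zero_le r) le_rfl hr
    rw [mem_iff_lt_rowLen] at this; omega
  · omega

lemma le_iff_colLen {μ ν : YoungDiagram} : μ ≤ ν ↔ ∀ x, μ.colLen x ≤ ν.colLen x := by
  constructor
  · intro h x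
    rcases Nat.eq_zero_or_pos (μ.colLen x) with h0 | h0
    · omega
    · have : (μ.colLen x - 1, x) ∈ μ := mem_iff_lt_colLen.mpr (by omega)
      have := mem_iff_lt_colLen.mp (h this)
      omega
  · intro h
    intro p hp
    rcases p with ⟨r, x⟩
    rw [mem_iff_lt_colLen] at hp ⊢
    exact lt_of_lt_of_le hp (h x)

lemma eq_of_colLen {μ ν : YoungDiagram} (h : ∀ x, μ.colLen x = ν.colLen x) : μ = ν :=
  le_antisymm (le_iff_colLen.mpr fun x => (h x).le) (le_iff_colLen.mpr fun x => (h x).ge)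

/-- `colLen` as a `countP` of the row-lengths list. -/
lemma colLen_eq_countP (x : ℕ) :
    lam.colLen x = lam.rowLens.countP (fun ℓ => decide (x < ℓ)) := by
  rw [rowLens, List.countP_map]
  have h2 : ∀ n : ℕ, ∀ m ≤ n, (List.range n).countP (fun r => decide (r < m)) = m := by
    intro n
    induction n with
    | zero => intro m hm; simp only [List.range_zero, List.countP_nil]; omega
    | succ n ih =>
      intro m hm
      rw [List.range_succ, List.countP_append]
      rcases Nat.lt_or_ge m (n+1) with h | h
      · have : m ≤ n := by omega
        rw [ih m this]
        simp only [List.countP_cons, List.countP_nil]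
        have : ¬ (n < m) := by omega
        simp [this]
      · have hm' : m = n + 1 := by omega
        subst hm'
        have hall : (List.range n).countP (fun r => decide (r < n + 1)) = n := by
          rw [List.countP_eq_length.mpr ?_, List.length_range]
          intro a ha
          simp only [List.mem_range] at ha
          simp only [decide_eq_true_eq]
          omega
        rw [hall]
        simp [List.countP_cons]
  have h3 : (List.range (lam.colLen 0)).countP ((fun ℓ => decide (x < ℓ)) ∘ lam.rowLen)
      = (List.range (lam.colLen 0)).countP (fun r => decide (r < lam.colLen x)) := by
    apply List.countP_congr
    intro r _
    simp only [Function.comp_apply, decide_eq_true_eq]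
    rw [← mem_iff_lt_rowLen, ← mem_iff_lt_colLen]
  rw [h3, h2 _ _ (lam.colLen_anti 0 x (Nat.zero_le x))]

/-- Pure list fact used to split off the count of a single value. -/
lemma countP_lt_split (x : ℕ) (l : List ℕ) :
    l.countP (fun ℓ => decide (x < ℓ)) = l.count (x+1) + l.countP (fun ℓ => decide (x+1 < ℓ)) := by
  induction l with
  | nil => simp
  | cons a l ih =>
    simp only [List.countP_cons, List.count_cons, ih]
    rcases Nat.lt_trichotomy a (x+1) with h | h | h
    · have h1 : ¬ (x < a) := by omega
      have h2 : ¬ (x + 1 < a) := by omega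
      have h3 : ¬ (a = x + 1) := by omega
      simp [h1, h2, h3]
    · subst h
      simp
      omega
    · have h1 : (x < a) := by omega
      have h2 : (x + 1 < a) := by omega
      have h3 : ¬ (a = x + 1) := by omega
      simp [h1, h2, h3]
      omega

lemma colLen_count_succ (x : ℕ) :
    lam.colLen x = lam.rowLens.count (x+1) + lam.colLen (x+1) := by
  rw [colLen_eq_countP, colLen_eq_countP, countP_lt_split]

lemma even_count_of_evenProfile (hep : lam.HasEvenProfile) (m : ℕ) :
    Even (lam.rowLens.count m) := by
  by_cases hm : m ∈ lam.rowLens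
  · exact hep _ (List.mem_map.mpr ⟨m, List.mem_dedup.mpr hm, rfl⟩)
  · rw [List.count_eq_zero.mpr hm]; exact Even.zero

lemma even_colLen_of_evenProfile (hep : lam.HasEvenProfile) (x : ℕ) :
    Even (lam.colLen x) := by
  have key : ∀ n x, lam.rowLen 0 ≤ x + n → Even (lam.colLen x) := by
    intro n
    induction n with
    | zero => intro x hx; rw [lam.colLen_eq_zero_of x (by omega)]; exact Even.zero
    | succ n ih =>
      intro x hx
      rw [lam.colLen_count_succ x]
      exact (lam.even_count_of_evenProfile hep (x+1)).add (ih (x+1) (by omega))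
  exact key (lam.rowLen 0) x (by omega)

end Aux

end YoungDiagram

section Part2

namespace YoungDiagram

variable (lam : YoungDiagram)

/-- The subdiagram of `lam` with column lengths clipped to `c`. -/
def clamp (c : ℕ → ℕ) : YoungDiagram where
  cells := lam.cells.filter fun p => ∀ y ≤ p.2, p.1 < c y
  isLowerSet := by
    rintro ⟨r1, x1⟩ ⟨r2, x2⟩ ⟨h1, h2⟩ hp
    simp only [Finset.coe_filter, Set.mem_setOf_eq, mem_cells] at hp ⊢
    refine ⟨lam.up_left_mem h1 h2 hp.1, fun y hy => lt_of_le_of_lt h1 (hp.2 y (le_trans hy h2))⟩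

lemma mem_clamp {c : ℕ → ℕ} {p : ℕ × ℕ} :
    p ∈ lam.clamp c ↔ p ∈ lam ∧ ∀ y ≤ p.2, p.1 < c y := by
  rw [← mem_cells, clamp, Finset.mem_filter]
  rw [mem_cells]

lemma colLen_clamp (c : ℕ → ℕ) (hanti : ∀ x, c (x+1) ≤ c x)
    (hle : ∀ x, c x ≤ lam.colLen x) (x : ℕ) : (lam.clamp c).colLen x = c x := by
  have hanti' : Antitone c := antitone_nat_of_succ_le hanti
  apply colLen_eq_of_iff
  intro r
  rw [mem_clamp]
  constructor
  · intro ⟨_, h⟩; exact h x le_rfl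
  · intro hr
    refine ⟨mem_iff_lt_colLen.mpr (lt_of_lt_of_le hr (hle x)), fun y hy => lt_of_lt_of_le hr (hanti' hy)⟩

/-- The condition defining the subtype counted by `mult`, in terms of column lengths. -/
def Q (k : ℕ) (μ : YoungDiagram) : Prop :=
  (∀ x, μ.colLen x ≤ lam.colLen x) ∧ (∀ x, Even (μ.colLen x)) ∧
    (∀ x, lam.colLen (x+1) ≤ μ.colLen x) ∧
    (∑ x ∈ Finset.range (lam.rowLen 0), (lam.colLen x - μ.colLen x)) = k

lemma strip_iff {μ : YoungDiagram} (hsub : μ ≤ lam) :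
    (∀ c₁ ∈ lam.cells \ μ.cells, ∀ c₂ ∈ lam.cells \ μ.cells, c₁.1 = c₂.1 → c₁ = c₂) ↔
      ∀ x, lam.colLen (x+1) ≤ μ.colLen x := by
  constructor
  · intro h x
    by_contra hc
    push_neg at hc
    set r := μ.colLen x with hr
    have h1 : (r, x) ∈ lam.cells \ μ.cells := by
      rw [Finset.mem_sdiff, mem_cells, mem_cells, mem_iff_lt_colLen, mem_iff_lt_colLen]
      constructor
      · have := lam.colLen_anti x (x+1) (by omega)
        omega
      · omega
    have h2 : (r, x+1) ∈ lam.cells \ μ.cells := by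
      rw [Finset.mem_sdiff, mem_cells, mem_cells, mem_iff_lt_colLen, mem_iff_lt_colLen]
      constructor
      · omega
      · have := μ.colLen_anti x (x+1) (by omega)
        omega
    have := h _ h1 _ h2 rfl
    simp at this
  · rintro h ⟨r1, x1⟩ h1 ⟨r2, x2⟩ h2 (he : r1 = r2)
    subst he
    rw [Finset.mem_sdiff, mem_cells, mem_cells, mem_iff_lt_colLen, mem_iff_lt_colLen] at h1 h2
    suffices hx : x1 = x2 by rw [hx]
    by_contra hne
    rcases Nat.lt_or_ge x1 x2 with hlt | hge
    · have : lam.colLen x2 ≤ lam.colLen (x1 + 1) := lam.colLen_anti _ _ (by omega)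
      have := h x1
      omega
    · have hlt : x2 < x1 := by omega
      have : lam.colLen x1 ≤ lam.colLen (x2 + 1) := lam.colLen_anti _ _ (by omega)
      have := h x2
      omega

lemma card_sdiff_eq {μ : YoungDiagram} (hsub : μ ≤ lam) :
    (lam.cells \ μ.cells).card
      = ∑ x ∈ Finset.range (lam.rowLen 0), (lam.colLen x - μ.colLen x) := by
  rw [Finset.card_eq_sum_card_fiberwise (f := Prod.snd) (t := Finset.range (lam.rowLen 0)) ?_]
  · apply Finset.sum_congr rfl
    intro x _
    have : (lam.cells \ μ.cells).filter (fun p => p.2 = x)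
        = (Finset.Ico (μ.colLen x) (lam.colLen x)).map
            ⟨fun r => (r, x), fun a b hab => by simpa using hab⟩ := by
      ext ⟨a, b⟩
      simp only [Finset.mem_filter, Finset.mem_sdiff, mem_cells, Finset.mem_map,
        Finset.mem_Ico, Function.Embedding.coeFn_mk, mem_iff_lt_colLen]
      constructor
      · rintro ⟨⟨h1, h2⟩, rfl⟩
        exact ⟨a, ⟨by omega, h1⟩, rfl⟩
      · rintro ⟨r, ⟨hr1, hr2⟩, he⟩
        obtain ⟨rfl, rfl⟩ : r = a ∧ x = b := by
          constructor <;> [exact congrArg Prod.fst he; exact congrArg Prod.snd he]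
        exact ⟨⟨hr2, by omega⟩, rfl⟩
    rw [this, Finset.card_map, Nat.card_Ico]
  · intro ⟨r, x⟩ hp
    rw [Finset.mem_coe, Finset.mem_sdiff, mem_cells] at hp
    rw [Finset.mem_coe, Finset.mem_range]
    have h1 : x < lam.rowLen r := mem_iff_lt_rowLen.mp hp.1
    have h2 : lam.rowLen r ≤ lam.rowLen 0 := lam.rowLen_anti 0 r (Nat.zero_le r)
    omega

lemma P_iff_Q (k : ℕ) (μ : YoungDiagram) :
    (μ ≤ lam ∧ μ.HasEvenColumns ∧ IsVerticalStrip μ lam k) ↔ lam.Q k μ := by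
  constructor
  · rintro ⟨hle, hev, hsub, hcard, hstrip⟩
    exact ⟨le_iff_colLen.mp hle, hev, (lam.strip_iff hle).mp hstrip,
      by rw [← lam.card_sdiff_eq hle, hcard]⟩
  · rintro ⟨h1, h2, h3, h4⟩
    have hle : μ ≤ lam := le_iff_colLen.mpr h1
    exact ⟨hle, h2, hle, by rw [lam.card_sdiff_eq hle, h4], (lam.strip_iff hle).mpr h3⟩

end YoungDiagram

end Part2

section Part3

namespace YoungDiagram

variable (lam : YoungDiagram) (x_j hj S : ℕ)

lemma tele (n : ℕ) :
    ∑ x ∈ Finset.range n, (lam.colLen x - lam.colLen (x+1)) = lam.colLen 0 - lam.colLen n := by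
  induction n with
  | zero => simp
  | succ n ih =>
    rw [Finset.sum_range_succ, ih]
    have h1 : lam.colLen (n+1) ≤ lam.colLen n := lam.colLen_anti n (n+1) (by omega)
    have h2 : lam.colLen n ≤ lam.colLen 0 := lam.colLen_anti 0 n (by omega)
    omega

/-- The total defect of `μ` in `lam` away from column `x_j`. -/
noncomputable def Tval (μ : YoungDiagram) : ℕ :=
  ∑ x ∈ (Finset.range (lam.rowLen 0)).erase x_j, (lam.colLen x - μ.colLen x)

lemma Tval_def (μ : YoungDiagram) :
    lam.Tval x_j μ = ∑ x ∈ (Finset.range (lam.rowLen 0)).erase x_j, (lam.colLen x - μ.colLen x) :=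
  rfl

/-- The modified diagram, with the defect at column `x_j` adjusted so the total is `m`. -/
noncomputable def stepD (μ : YoungDiagram) (m : ℕ) : YoungDiagram :=
  lam.clamp fun x => if x = x_j then lam.colLen x_j + lam.Tval x_j μ - m else μ.colLen x

lemma Tval_le (hjW : x_j < lam.rowLen 0) (e3 : lam.colLen (x_j+1) + hj = lam.colLen x_j)
    (hS : S + hj = lam.colLen 0) {k : ℕ} {μ : YoungDiagram} (hμ : lam.Q k μ) :
    lam.Tval x_j μ ≤ S := by
  obtain ⟨h1, h2, h3, h4⟩ := hμ
  have hb : lam.Tval x_j μ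
      ≤ ∑ x ∈ (Finset.range (lam.rowLen 0)).erase x_j, (lam.colLen x - lam.colLen (x+1)) := by
    apply Finset.sum_le_sum
    intro x _
    have := h3 x
    omega
  have hsplit : (lam.colLen x_j - lam.colLen (x_j+1))
      + ∑ x ∈ (Finset.range (lam.rowLen 0)).erase x_j, (lam.colLen x - lam.colLen (x+1))
      = lam.colLen 0 - lam.colLen (lam.rowLen 0) := by
    rw [← lam.tele (lam.rowLen 0)]
    exact Finset.add_sum_erase _ (fun x => lam.colLen x - lam.colLen (x+1))
      (Finset.mem_range.mpr hjW)
  have hzero : lam.colLen (lam.rowLen 0) = 0 := lam.colLen_eq_zero_of _ le_rfl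
  omega

lemma Tval_e1 (hjW : x_j < lam.rowLen 0) {k : ℕ} {μ : YoungDiagram} (hμ : lam.Q k μ) :
    (lam.colLen x_j - μ.colLen x_j) + lam.Tval x_j μ = k := by
  obtain ⟨h1, h2, h3, h4⟩ := hμ
  have h := Finset.add_sum_erase (Finset.range (lam.rowLen 0))
    (fun x => lam.colLen x - μ.colLen x) (Finset.mem_range.mpr hjW)
  rw [Tval_def]
  rw [h4] at h
  exact h

lemma step_main (hjW : x_j < lam.rowLen 0) (e3 : lam.colLen (x_j+1) + hj = lam.colLen x_j)
    (hS : S + hj = lam.colLen 0) (heL : ∀ x, Even (lam.colLen x))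
    {k : ℕ} {μ : YoungDiagram} (hμ : lam.Q k μ)
    (m : ℕ) (hme : Even m) (hmS : S ≤ m) (hmj : m ≤ hj) :
    ((lam.stepD x_j μ m).colLen x_j = lam.colLen x_j + lam.Tval x_j μ - m
        ∧ ∀ x, x ≠ x_j → (lam.stepD x_j μ m).colLen x = μ.colLen x)
      ∧ lam.Q m (lam.stepD x_j μ m) := by
  have hT := lam.Tval_le x_j hj S hjW e3 hS hμ
  have he1 := lam.Tval_e1 x_j hjW hμ
  obtain ⟨h1, h2, h3, h4⟩ := hμ
  set T := lam.Tval x_j μ with hTdef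
  set c : ℕ → ℕ := fun x => if x = x_j then lam.colLen x_j + T - m else μ.colLen x with hc
  have hcj : c x_j = lam.colLen x_j + T - m := if_pos rfl
  have hcne : ∀ x, x ≠ x_j → c x = μ.colLen x := fun x hx => if_neg hx
  have hTm : T ≤ m := le_trans hT hmS
  have key1 : lam.colLen (x_j+1) ≤ lam.colLen x_j + T - m := by omega
  have keyle : lam.colLen x_j + T - m ≤ lam.colLen x_j := by omega
  have hanti : ∀ x, c (x+1) ≤ c x := by
    intro x
    by_cases hx : x = x_j
    · rw [hcne (x+1) (by omega), hx, hcj]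
      exact le_trans (h1 (x_j+1)) key1
    · by_cases hx1 : x + 1 = x_j
      · rw [hcne x hx, hx1, hcj]
        have hx3 : lam.colLen (x+1) ≤ μ.colLen x := h3 x
        rw [hx1] at hx3
        omega
      · rw [hcne (x+1) hx1, hcne x hx]
        exact μ.colLen_anti x (x+1) (by omega)
  have hle : ∀ x, c x ≤ lam.colLen x := by
    intro x
    by_cases hx : x = x_j
    · rw [hx, hcj]
      exact keyle
    · rw [hcne x hx]
      exact h1 x
  have hcol : ∀ x, (lam.stepD x_j μ m).colLen x = c x := by
    intro x
    exact lam.colLen_clamp c hanti hle x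
  have hcolj : (lam.stepD x_j μ m).colLen x_j = lam.colLen x_j + T - m := by
    rw [hcol x_j, hcj]
  have hcolne : ∀ x, x ≠ x_j → (lam.stepD x_j μ m).colLen x = μ.colLen x := by
    intro x hx
    rw [hcol x, hcne x hx]
  have hTe : Even T := by
    rw [hTdef, Tval_def]
    refine Finset.sum_induction _ _ (fun a b => Even.add) Even.zero ?_
    intro x _
    have e1 := heL x
    have e2 := h2 x
    have e4 := h1 x
    rw [Nat.even_iff] at e1 e2 ⊢
    omega
  refine ⟨⟨hcolj, hcolne⟩, ?_, ?_, ?_, ?_⟩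
  · intro x
    by_cases hx : x = x_j
    · rw [hx, hcolj]
      exact keyle
    · rw [hcolne x hx]
      exact h1 x
  · intro x
    by_cases hx : x = x_j
    · rw [hx, hcolj]
      have e1 := heL x_j
      have e2 := hme
      rw [Nat.even_iff] at e1 e2 hTe ⊢
      omega
    · rw [hcolne x hx]
      exact h2 x
  · intro x
    by_cases hx : x = x_j
    · rw [hx, hcolj]
      exact key1
    · rw [hcolne x hx]
      exact h3 x
  · have herase : ∑ x ∈ (Finset.range (lam.rowLen 0)).erase x_j,
        (lam.colLen x - (lam.stepD x_j μ m).colLen x) = T := by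
      rw [hTdef, Tval_def]
      apply Finset.sum_congr rfl
      intro x hx
      rw [hcolne x (Finset.ne_of_mem_erase hx)]
    have hsplit : (lam.colLen x_j - (lam.stepD x_j μ m).colLen x_j)
        + ∑ x ∈ (Finset.range (lam.rowLen 0)).erase x_j,
            (lam.colLen x - (lam.stepD x_j μ m).colLen x)
        = ∑ x ∈ Finset.range (lam.rowLen 0), (lam.colLen x - (lam.stepD x_j μ m).colLen x) :=
      Finset.add_sum_erase _ (fun x => lam.colLen x - (lam.stepD x_j μ m).colLen x)
        (Finset.mem_range.mpr hjW)
    rw [← hsplit, herase, hcolj]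
    omega

end YoungDiagram

end Part3

/-- for a diagram with even profile `(h₀, …, hₙ)`, if `h_j > Σ_{i ≠ j} h_i`
for some index `j`, then `mult lam` is constant on even integers in the interval
`[Σ_{i ≠ j} h_i, h_j]`. -/
theorem mult_constant_of_dominant_entry (lam : YoungDiagram) (hep : lam.HasEvenProfile)
    (j : Fin lam.profile.length)
    (hbig : (∑ i ∈ Finset.univ.filter (· ≠ j), lam.profile.get i) < lam.profile.get j)
    (k k' : ℕ) (hk : Even k) (hk' : Even k')
    (hk₁ : (∑ i ∈ Finset.univ.filter (· ≠ j), lam.profile.get i) ≤ k)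
    (hk₂ : k ≤ lam.profile.get j)
    (hk₁' : (∑ i ∈ Finset.univ.filter (· ≠ j), lam.profile.get i) ≤ k')
    (hk₂' : k' ≤ lam.profile.get j) :
    lam.mult k = lam.mult k' := by
  classical
  have hjlt : (j : ℕ) < lam.rowLens.dedup.length := by
    have := j.isLt
    simpa [YoungDiagram.profile] using this
  set ℓ := lam.rowLens.dedup.get ⟨j, hjlt⟩ with hldef
  have hjval : lam.profile.get j = lam.rowLens.count ℓ := by
    rw [hldef]
    simp [YoungDiagram.profile, List.get_eq_getElem]
    exact List.getElem_map ..
  have hmem : ℓ ∈ lam.rowLens := List.mem_dedup.mp (List.get_mem _ _)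
  have hl1 : 0 < ℓ := lam.pos_of_mem_rowLens ℓ hmem
  have hlW : ℓ ≤ lam.rowLen 0 := by
    rw [YoungDiagram.rowLens] at hmem
    obtain ⟨r, hr, hrl⟩ := List.mem_map.mp hmem
    rw [← hrl]
    exact lam.rowLen_anti 0 r (Nat.zero_le r)
  set x_j := ℓ - 1 with hxdef
  have hx1 : x_j + 1 = ℓ := by omega
  have hjW : x_j < lam.rowLen 0 := by omega
  have e3 : lam.colLen (x_j + 1) + lam.profile.get j = lam.colLen x_j := by
    have h := lam.colLen_count_succ x_j
    rw [hx1] at h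
    rw [hx1, hjval]
    omega
  set S := ∑ i ∈ Finset.univ.filter (· ≠ j), lam.profile.get i with hSdef
  have htot : (∑ i : Fin lam.profile.length, lam.profile.get i) = lam.colLen 0 := by
    have h1 : lam.profile.sum = lam.rowLens.length := by
      rw [YoungDiagram.profile]
      exact List.sum_map_count_dedup_eq_length _
    have h2 : (∑ i : Fin lam.profile.length, lam.profile.get i) = lam.profile.sum := by
      simp only [List.get_eq_getElem]
      exact Fin.sum_univ_getElem _
    rw [h2, h1, YoungDiagram.length_rowLens]
  have hsplit : lam.profile.get j + S = ∑ i : Fin lam.profile.length, lam.profile.get i := by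
    rw [hSdef, Finset.filter_ne']
    exact Finset.add_sum_erase _ (fun i => lam.profile.get i) (Finset.mem_univ j)
  have hS : S + lam.profile.get j = lam.colLen 0 := by omega
  have heL := lam.even_colLen_of_evenProfile hep
  set hjv := lam.profile.get j with hjvdef
  have inv : ∀ (a b : ℕ), Even a → Even b → S ≤ a → a ≤ hjv → S ≤ b → b ≤ hjv →
      ∀ μ : YoungDiagram, lam.Q a μ →
        lam.Q b (lam.stepD x_j μ b) ∧ lam.stepD x_j (lam.stepD x_j μ b) a = μ := by
    intro a b hae hbe haS haj hbS hbj μ hμ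
    obtain ⟨⟨hc1j, hc1ne⟩, hQ1⟩ := lam.step_main x_j hjv S hjW e3 hS heL hμ b hbe hbS hbj
    refine ⟨hQ1, ?_⟩
    obtain ⟨⟨hc2j, hc2ne⟩, hQ2⟩ := lam.step_main x_j hjv S hjW e3 hS heL hQ1 a hae haS haj
    have hTeq : lam.Tval x_j (lam.stepD x_j μ b) = lam.Tval x_j μ := by
      rw [YoungDiagram.Tval_def, YoungDiagram.Tval_def]
      apply Finset.sum_congr rfl
      intro x hx
      rw [hc1ne x (Finset.ne_of_mem_erase hx)]
    have he1 := lam.Tval_e1 x_j hjW hμ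
    have hT := lam.Tval_le x_j hjv S hjW e3 hS hμ
    apply YoungDiagram.eq_of_colLen
    intro x
    by_cases hx : x = x_j
    · rw [hx, hc2j, hTeq]
      have hμle := hμ.1 x_j
      omega
    · rw [hc2ne x hx, hc1ne x hx]
  have E : {μ : YoungDiagram // lam.Q k μ} ≃ {μ : YoungDiagram // lam.Q k' μ} :=
    { toFun := fun m => ⟨lam.stepD x_j m.1 k', (inv k k' hk hk' hk₁ hk₂ hk₁' hk₂' m.1 m.2).1⟩
      invFun := fun m => ⟨lam.stepD x_j m.1 k, (inv k' k hk' hk hk₁' hk₂' hk₁ hk₂ m.1 m.2).1⟩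
      left_inv := fun m => Subtype.ext (inv k k' hk hk' hk₁ hk₂ hk₁' hk₂' m.1 m.2).2
      right_inv := fun m => Subtype.ext (inv k' k hk' hk hk₁' hk₂' hk₁ hk₂ m.1 m.2).2 }
  exact Nat.card_congr ((Equiv.subtypeEquivRight fun μ => lam.P_iff_Q k μ).trans
    (E.trans (Equiv.subtypeEquivRight fun μ => (lam.P_iff_Q k' μ).symm)))
end

section
/- Let λ be a mildly odd Young diagram. Then mult(λ, k) = mult(λ, 2⌈ht(λ)/2⌉ − k) for every integer k with 0 ≤ k ≤ 2⌈ht(λ)/2⌉; that is, the function k ↦ mult(λ, k) is symmetric with respect to the argument ⌈ht(λ)/2⌉. -/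
open scoped Classical

namespace YoungDiagramAux

open YoungDiagram Finset

lemma colLen_le_of_le {μ lam : YoungDiagram} (h : μ ≤ lam) (j : ℕ) :
    μ.colLen j ≤ lam.colLen j := by
  by_contra hc
  push_neg at hc
  have h1 : (lam.colLen j, j) ∈ μ := mem_iff_lt_colLen.mpr hc
  have h2 : (lam.colLen j, j) ∈ lam := h h1
  exact lt_irrefl _ (mem_iff_lt_colLen.mp h2)

lemma colLen_eq_of {μ : YoungDiagram} {j t : ℕ} (h : ∀ i, (i, j) ∈ μ ↔ i < t) :
    μ.colLen j = t := by
  refine le_antisymm ?_ ?_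
  · by_contra hc
    push_neg at hc
    exact lt_irrefl t ((h t).mp (mem_iff_lt_colLen.mpr hc))
  · rcases Nat.eq_zero_or_pos t with ht | ht
    · omega
    · have : (t - 1, j) ∈ μ := (h (t - 1)).mpr (by omega)
      have := mem_iff_lt_colLen.mp this
      omega

lemma colLen_zero_of_ge {lam : YoungDiagram} {j : ℕ} (h : lam.rowLen 0 ≤ j) :
    lam.colLen j = 0 := by
  by_contra hc
  have h1 : (0, j) ∈ lam := mem_iff_lt_colLen.mpr (Nat.pos_of_ne_zero hc)
  have h2 := mem_iff_lt_rowLen.mp h1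
  omega

lemma interlace_of_strip {μ lam : YoungDiagram} (hle : μ ≤ lam)
    (h : ∀ c₁ ∈ lam.cells \ μ.cells, ∀ c₂ ∈ lam.cells \ μ.cells, c₁.1 = c₂.1 → c₁ = c₂)
    (j : ℕ) : lam.colLen (j+1) ≤ μ.colLen j := by
  by_contra hc
  push_neg at hc
  set i := μ.colLen j with hi
  have hmono : μ.colLen (j+1) ≤ μ.colLen j := μ.colLen_anti j (j+1) (by omega)
  have h1 : (i, j) ∈ lam.cells \ μ.cells := by
    rw [Finset.mem_sdiff, mem_cells, mem_cells, mem_iff_lt_colLen, mem_iff_lt_colLen]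
    exact ⟨lt_of_lt_of_le hc (lam.colLen_anti j (j+1) (by omega)), by omega⟩
  have h2 : (i, j+1) ∈ lam.cells \ μ.cells := by
    rw [Finset.mem_sdiff, mem_cells, mem_cells, mem_iff_lt_colLen, mem_iff_lt_colLen]
    exact ⟨hc, by omega⟩
  have := h _ h1 _ h2 rfl
  simp at this

lemma strip_of_interlace {μ lam : YoungDiagram}
    (h : ∀ j, lam.colLen (j+1) ≤ μ.colLen j) :
    ∀ c₁ ∈ lam.cells \ μ.cells, ∀ c₂ ∈ lam.cells \ μ.cells, c₁.1 = c₂.1 → c₁ = c₂ := by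
  have key : ∀ i j₁ j₂, j₁ < j₂ → (i, j₁) ∈ lam.cells \ μ.cells →
      (i, j₂) ∈ lam.cells \ μ.cells → False := by
    intro i j₁ j₂ hj h1 h2
    rw [Finset.mem_sdiff, mem_cells, mem_cells, mem_iff_lt_colLen, mem_iff_lt_colLen] at h1 h2
    have ha : lam.colLen j₂ ≤ lam.colLen (j₁ + 1) := lam.colLen_anti (j₁+1) j₂ (by omega)
    have := h j₁
    omega
  rintro ⟨i₁, j₁⟩ h1 ⟨i₂, j₂⟩ h2 (heq : i₁ = i₂)
  subst heq
  rcases lt_trichotomy j₁ j₂ with hj | hj | hj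
  · exact absurd (key i₁ j₁ j₂ hj h1 h2) (not_false)
  · rw [hj]
  · exact absurd (key i₁ j₂ j₁ hj h2 h1) (not_false)

lemma card_sdiff_eq {μ lam : YoungDiagram} (hle : μ ≤ lam) :
    (lam.cells \ μ.cells).card
      = ∑ j ∈ Finset.range (lam.rowLen 0), (lam.colLen j - μ.colLen j) := by
  rw [Finset.card_eq_sum_card_fiberwise (f := fun c => c.2)
    (t := Finset.range (lam.rowLen 0)) ?_]
  · refine Finset.sum_congr rfl fun j _ => ?_
    have hset : (lam.cells \ μ.cells).filter (fun c => c.2 = j)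
        = (Finset.Ico (μ.colLen j) (lam.colLen j)).map
            ⟨fun i => (i, j), fun a b h => by simpa using h⟩ := by
      ext ⟨i, j'⟩
      simp only [Finset.mem_filter, Finset.mem_sdiff, mem_cells, Finset.mem_map,
        Finset.mem_Ico, Function.Embedding.coeFn_mk]
      constructor
      · rintro ⟨⟨ha, hb⟩, rfl⟩
        rw [mem_iff_lt_colLen] at ha hb
        exact ⟨i, ⟨by omega, ha⟩, rfl⟩
      · rintro ⟨a, ⟨ha1, ha2⟩, heq⟩
        injection heq with h1 h2
        subst h1; subst h2
        rw [mem_iff_lt_colLen, mem_iff_lt_colLen]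
        exact ⟨⟨ha2, by omega⟩, rfl⟩
    rw [hset, Finset.card_map, Nat.card_Ico]
  · rintro ⟨i, j⟩ hc
    rw [Finset.mem_coe, Finset.mem_sdiff, mem_cells] at hc
    rw [Finset.mem_coe, Finset.mem_range]
    have h1 := mem_iff_lt_rowLen.mp hc.1
    have h2 : lam.rowLen i ≤ lam.rowLen 0 := lam.rowLen_anti 0 i (Nat.zero_le i)
    show j < lam.rowLen 0
    omega

/-- The sub-diagram of `lam` cut out by the column-length profile `f`. -/
noncomputable def subDiag (lam : YoungDiagram) (f : ℕ → ℕ) : YoungDiagram where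
  cells := lam.cells.filter fun c => ∀ j' ≤ c.2, c.1 < f j'
  isLowerSet := by
    rintro ⟨i₁, j₁⟩ ⟨i₂, j₂⟩ hle hc
    simp only [Finset.coe_filter, Set.mem_setOf_eq, mem_cells] at hc ⊢
    obtain ⟨hi, hj⟩ := Prod.mk_le_mk.mp hle
    exact ⟨lam.isLowerSet hle hc.1,
      fun j' hj' => lt_of_le_of_lt hi (hc.2 j' (hj'.trans hj))⟩

lemma mem_subDiag {lam : YoungDiagram} {f : ℕ → ℕ} {i j : ℕ} :
    (i, j) ∈ subDiag lam f ↔ (i, j) ∈ lam ∧ ∀ j' ≤ j, i < f j' := by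
  rw [← mem_cells]
  simp only [subDiag, Finset.mem_filter, mem_cells]

lemma subDiag_le (lam : YoungDiagram) (f : ℕ → ℕ) : subDiag lam f ≤ lam := by
  rintro ⟨i, j⟩ hc
  exact (mem_subDiag.mp hc).1

lemma colLen_subDiag {lam : YoungDiagram} {f : ℕ → ℕ} (hanti : Antitone f)
    (hfle : ∀ j, f j ≤ lam.colLen j) (j : ℕ) : (subDiag lam f).colLen j = f j := by
  refine colLen_eq_of fun i => ?_
  rw [mem_subDiag]
  constructor
  · rintro ⟨_, hall⟩; exact hall j le_rfl
  · intro hi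
    refine ⟨mem_iff_lt_colLen.mpr (lt_of_lt_of_le hi (hfle j)),
      fun j' hj' => lt_of_lt_of_le hi (hanti hj')⟩

lemma subDiag_colLen {μ lam : YoungDiagram} (hle : μ ≤ lam) :
    subDiag lam μ.colLen = μ := by
  apply SetLike.ext
  rintro ⟨i, j⟩
  rw [mem_subDiag]
  constructor
  · rintro ⟨_, hall⟩; exact mem_iff_lt_colLen.mpr (hall j le_rfl)
  · intro hi
    have hi' : i < μ.colLen j := mem_iff_lt_colLen.mp hi
    exact ⟨hle hi, fun j' hj' => lt_of_lt_of_le hi' (μ.colLen_anti j' j hj')⟩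

/-- The column profile of the reflected diagram. -/
noncomputable def phiF (lam μ : YoungDiagram) (j : ℕ) : ℕ :=
  (2 * ((lam.colLen (j+1) + 1) / 2) + 2 * (lam.colLen j / 2)) - μ.colLen j

/-- The reflection involution. -/
noncomputable def Phi (lam μ : YoungDiagram) : YoungDiagram :=
  subDiag lam (phiF lam μ)

lemma telescope (g : ℕ → ℕ) (hg : ∀ j, g (j+1) ≤ g j) (M : ℕ) :
    ∑ j ∈ Finset.range M, (g j - g (j+1)) = g 0 - g M := by
  induction M with
  | zero => simp
  | succ M ih =>
      rw [Finset.sum_range_succ, ih]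
      have h1 : g M ≤ g 0 := (antitone_nat_of_succ_le hg) (Nat.zero_le M)
      have h2 := hg M
      omega

lemma key (lam μ : YoungDiagram) (hle : μ ≤ lam) (hev : μ.HasEvenColumns)
    (hint : ∀ j, lam.colLen (j+1) ≤ μ.colLen j) :
    Phi lam μ ≤ lam ∧ (Phi lam μ).HasEvenColumns ∧
    (∀ j, lam.colLen (j+1) ≤ (Phi lam μ).colLen j) ∧
    Phi lam (Phi lam μ) = μ ∧
    (lam.cells \ μ.cells).card + (lam.cells \ (Phi lam μ).cells).card
        = 2 * ((lam.colLen 0 + 1) / 2) := by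
  have hb : ∀ j, lam.colLen (j+1) ≤ μ.colLen j ∧ μ.colLen j ≤ lam.colLen j ∧
      μ.colLen j % 2 = 0 :=
    fun j => ⟨hint j, colLen_le_of_le hle j, Nat.even_iff.mp (hev j)⟩
  have hf3 : ∀ j, phiF lam μ j ≤ lam.colLen j := by
    intro j; have := hb j; unfold phiF; omega
  have hf2 : ∀ j, lam.colLen (j+1) ≤ phiF lam μ j := by
    intro j; have := hb j; unfold phiF; omega
  have hanti : Antitone (phiF lam μ) :=
    antitone_nat_of_succ_le fun j => le_trans (hf3 (j+1)) (hf2 j)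
  have hcol : ∀ j, (Phi lam μ).colLen j = phiF lam μ j :=
    colLen_subDiag hanti hf3
  have hple : Phi lam μ ≤ lam := subDiag_le lam _
  refine ⟨hple, ?_, ?_, ?_, ?_⟩
  · intro j
    rw [hcol j]
    rw [Nat.even_iff]
    have := hb j; unfold phiF; omega
  · intro j
    rw [hcol j]
    exact hf2 j
  · have hfun : phiF lam (Phi lam μ) = μ.colLen := by
      funext j
      unfold phiF
      rw [hcol j]
      have := hb j; unfold phiF; omega
    rw [Phi, hfun, subDiag_colLen hle]
  · rw [card_sdiff_eq hle, card_sdiff_eq hple, ← Finset.sum_add_distrib]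
    have hsum : ∀ j ∈ Finset.range (lam.rowLen 0),
        (lam.colLen j - μ.colLen j) + (lam.colLen j - (Phi lam μ).colLen j)
          = 2 * ((lam.colLen j + 1) / 2) - 2 * ((lam.colLen (j+1) + 1) / 2) := by
      intro j _
      rw [hcol j]
      have := hb j; unfold phiF; omega
    rw [Finset.sum_congr rfl hsum]
    have hg : ∀ j, 2 * ((lam.colLen (j+1) + 1) / 2) ≤ 2 * ((lam.colLen j + 1) / 2) := by
      intro j
      have := lam.colLen_anti j (j+1) (by omega)
      omega
    rw [telescope _ hg]
    rw [colLen_zero_of_ge (le_refl (lam.rowLen 0))]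
    omega

lemma mem_S {lam : YoungDiagram} (μ : YoungDiagram) (k k' : ℕ)
    (h : μ ≤ lam ∧ μ.HasEvenColumns ∧ IsVerticalStrip μ lam k)
    (hk : k + k' = 2 * ((lam.colLen 0 + 1) / 2)) :
    (Phi lam μ ≤ lam ∧ (Phi lam μ).HasEvenColumns ∧ IsVerticalStrip (Phi lam μ) lam k')
      ∧ Phi lam (Phi lam μ) = μ := by
  obtain ⟨hle, hev, hVS⟩ := h
  obtain ⟨_, hcard, huniq⟩ := hVS
  have hint : ∀ j, lam.colLen (j+1) ≤ μ.colLen j := interlace_of_strip hle huniq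
  obtain ⟨hple, hpev, hpint, hpp, hsum⟩ := key lam μ hle hev hint
  refine ⟨⟨hple, hpev, hple, ?_, strip_of_interlace hpint⟩, hpp⟩
  omega

end YoungDiagramAux

/-- for a mildly odd diagram, `mult lam` is symmetric with respect to the
argument `⌈ht lam / 2⌉`. -/
theorem mult_symm_of_mildlyOdd (lam : YoungDiagram) (hmo : lam.MildlyOdd)
    (k : ℕ) (hk : k ≤ 2 * ((lam.ht + 1) / 2)) :
    lam.mult k = lam.mult (2 * ((lam.ht + 1) / 2) - k) := by
  have hht : lam.ht = lam.colLen 0 := rfl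
  rw [YoungDiagram.mult, YoungDiagram.mult]
  refine Nat.card_congr
    ⟨fun μ => ⟨YoungDiagramAux.Phi lam μ.1,
        (YoungDiagramAux.mem_S μ.1 k (2 * ((lam.ht + 1) / 2) - k) μ.2 (by rw [hht] at hk ⊢; omega)).1⟩,
      fun μ => ⟨YoungDiagramAux.Phi lam μ.1,
        (YoungDiagramAux.mem_S μ.1 (2 * ((lam.ht + 1) / 2) - k) k μ.2 (by rw [hht] at hk ⊢; omega)).1⟩,
      fun μ => Subtype.ext (YoungDiagramAux.mem_S μ.1 k (2 * ((lam.ht + 1) / 2) - k) μ.2 (by rw [hht] at hk ⊢; omega)).2,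
      fun μ => Subtype.ext (YoungDiagramAux.mem_S μ.1 (2 * ((lam.ht + 1) / 2) - k) k μ.2 (by rw [hht] at hk ⊢; omega)).2⟩
end

section
/- Let λ be a mildly odd Young diagram and let c = #oddcolumns(λ). If k and k′ are integers with 0 ≤ k ≤ k′ ≤ ⌈ht(λ)/2⌉ and k ≡ k′ ≡ c (mod 2), then mult(λ, k) ≤ mult(λ, k′); that is, restricted to arguments of the same parity as c, the function k ↦ mult(λ, k) is non-decreasing on the segment from 0 to ⌈ht(λ)/2⌉. -/
open scoped Classical

namespace MultAux

def NN : List ℕ → ℤ → ℕ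
  | [], s => if s = 0 then 1 else 0
  | T :: L, s => ∑ i ∈ Finset.range (T + 1), NN L (s - i)

lemma NN_neg : ∀ (L : List ℕ) (s : ℤ), s < 0 → NN L s = 0
  | [], s, hs => by
      rw [show NN [] s = if s = 0 then 1 else 0 from rfl, if_neg (by omega : ¬ s = 0)]
  | T :: L, s, hs => by
      simp only [NN]
      exact Finset.sum_eq_zero fun i _ => NN_neg L _ (by have : (0:ℤ) ≤ (i:ℤ) := Int.natCast_nonneg i; omega)

lemma NN_symm : ∀ (L : List ℕ) (s : ℤ), NN L ((L.sum : ℤ) - s) = NN L s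
  | [], s => by simp only [NN, List.sum_nil, Int.natCast_zero, zero_sub, neg_eq_zero]
  | T :: L, s => by
      simp only [NN, List.sum_cons]
      rw [← Finset.sum_range_reflect (fun j => NN L (s - j)) (T + 1)]
      refine Finset.sum_congr rfl fun i hi => ?_
      rw [Finset.mem_range] at hi
      have h1 : ((↑(T + L.sum) : ℤ) - s - (i : ℕ)) = (L.sum : ℤ) - (s - (↑(T + 1 - 1 - i) : ℤ)) := by
        rw [show T + 1 - 1 - i = T - i by omega, Nat.cast_sub (by omega)]
        push_cast
        ring
      rw [h1, NN_symm L]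

lemma NN_le_of_aux (L : List ℕ) (step : ∀ s : ℤ, 2 * s + 2 ≤ (L.sum : ℤ) → NN L s ≤ NN L (s + 1)) :
    ∀ (d : ℕ) (a : ℤ), 2 * (a + d) ≤ (L.sum : ℤ) → NN L a ≤ NN L (a + d) := by
  intro d
  induction d with
  | zero => intro a _; simp
  | succ d ih =>
      intro a h
      have h1 : NN L a ≤ NN L (a + d) := ih a (by push_cast at h ⊢; omega)
      have h2 : NN L (a + d) ≤ NN L (a + d + 1) := step (a + d) (by push_cast at h ⊢; omega)
      calc NN L a ≤ NN L (a + d) := h1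
        _ ≤ NN L (a + (d+1):ℤ) := by push_cast; rw [show a + ((d:ℤ)+1) = a + d + 1 by ring]; exact h2

lemma NN_le_of (L : List ℕ) (step : ∀ s : ℤ, 2 * s + 2 ≤ (L.sum : ℤ) → NN L s ≤ NN L (s + 1)) :
    ∀ a b : ℤ, a ≤ b → a + b ≤ (L.sum : ℤ) → NN L a ≤ NN L b := by
  have half : ∀ a b : ℤ, a ≤ b → 2 * b ≤ (L.sum : ℤ) → NN L a ≤ NN L b := by
    intro a b hab h2b
    obtain ⟨d, hd⟩ : ∃ d : ℕ, b = a + d := ⟨(b - a).toNat, by omega⟩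
    subst hd
    exact NN_le_of_aux L step d a (by omega)
  intro a b hab habs
  by_cases h2b : 2 * b ≤ (L.sum : ℤ)
  · exact half a b hab h2b
  · have hb' : NN L ((L.sum : ℤ) - b) = NN L b := NN_symm L b
    rw [← hb']
    exact half a ((L.sum : ℤ) - b) (by omega) (by omega)

lemma NN_step : ∀ (L : List ℕ) (s : ℤ), 2 * s + 2 ≤ (L.sum : ℤ) → NN L s ≤ NN L (s + 1)
  | [], s, hs => by
      have : s < 0 := by simp at hs; omega
      rw [NN_neg [] s this]; exact Nat.zero_le _
  | T :: L, s, hs => by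
      have key : NN L (s - T) ≤ NN L (s + 1) := by
        refine NN_le_of L (NN_step L) (s - T) (s + 1) (by omega) ?_
        simp only [List.sum_cons] at hs
        push_cast at hs ⊢
        omega
      simp only [NN]
      rw [Finset.sum_range_succ, Finset.sum_range_succ']
      have e1 : ∀ i : ℕ, s + 1 - (↑(i + 1) : ℤ) = s - i := by intro i; push_cast; ring
      calc (∑ i ∈ Finset.range T, NN L (s - ↑i)) + NN L (s - ↑T)
          ≤ (∑ i ∈ Finset.range T, NN L (s - ↑i)) + NN L (s + 1) := by
            exact Nat.add_le_add_left key _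
        _ = (∑ i ∈ Finset.range T, NN L (s + 1 - ↑(i + 1))) + NN L (s + 1 - ↑(0:ℕ)) := by
            simp only [e1]
            norm_num

lemma NN_mono (L : List ℕ) (a b : ℤ) (hab : a ≤ b) (hs : a + b ≤ (L.sum : ℤ)) :
    NN L a ≤ NN L b := NN_le_of L (NN_step L) a b hab hs

def tup : List ℕ → ℕ → Finset (List ℕ)
  | [], s => if s = 0 then {[]} else ∅
  | T :: L, s =>
      (Finset.range (T + 1)).biUnion fun i =>
        if i ≤ s then (tup L (s - i)).image (fun t => i :: t) else ∅

lemma mem_tup : ∀ (L : List ℕ) (s : ℕ) (l : List ℕ),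
    l ∈ tup L s ↔ List.Forall₂ (· ≤ ·) l L ∧ l.sum = s
  | [], s, l => by
      constructor
      · intro h
        rw [show tup [] s = if s = 0 then {[]} else ∅ from rfl] at h
        split at h
        · simp only [Finset.mem_singleton] at h
          subst h
          simp_all [List.Forall₂.nil]
        · simp at h
      · rintro ⟨h1, h2⟩
        rw [List.forall₂_nil_right_iff] at h1
        subst h1
        simp at h2
        rw [show tup [] s = if s = 0 then {[]} else ∅ from rfl, if_pos h2.symm]
        simp
  | T :: L, s, l => by
      rw [show tup (T :: L) s = (Finset.range (T + 1)).biUnion fun i =>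
        if i ≤ s then (tup L (s - i)).image (fun t => i :: t) else ∅ from rfl]
      rw [Finset.mem_biUnion]
      constructor
      · rintro ⟨i, hi, h⟩
        rw [Finset.mem_range] at hi
        split at h
        case isTrue his =>
          rw [Finset.mem_image] at h
          obtain ⟨t, ht, rfl⟩ := h
          rw [mem_tup L] at ht
          refine ⟨List.Forall₂.cons (by omega) ht.1, ?_⟩
          simp [ht.2]
          omega
        case isFalse => simp at h
      · rintro ⟨h1, h2⟩
        rw [List.forall₂_cons_right_iff] at h1
        obtain ⟨a, t, hal, hft, rfl⟩ := h1
        simp only [List.sum_cons] at h2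
        refine ⟨a, Finset.mem_range.mpr (by omega), ?_⟩
        rw [if_pos (by omega : a ≤ s), Finset.mem_image]
        exact ⟨t, (mem_tup L _ t).mpr ⟨hft, by omega⟩, rfl⟩

lemma card_tup : ∀ (L : List ℕ) (s : ℕ), (tup L s).card = NN L (s : ℤ)
  | [], s => by
      rw [show tup [] s = if s = 0 then {[]} else ∅ from rfl,
        show NN [] (s : ℤ) = if (s : ℤ) = 0 then 1 else 0 from rfl]
      by_cases h : s = 0
      · rw [if_pos h, if_pos (by exact_mod_cast h)]; simp
      · rw [if_neg h, if_neg (by exact_mod_cast h)]; simp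
  | T :: L, s => by
      rw [show tup (T :: L) s = (Finset.range (T + 1)).biUnion fun i =>
        if i ≤ s then (tup L (s - i)).image (fun t => i :: t) else ∅ from rfl]
      rw [show NN (T :: L) (s : ℤ) = ∑ i ∈ Finset.range (T + 1), NN L ((s : ℤ) - i) from rfl]
      rw [Finset.card_biUnion]
      · refine Finset.sum_congr rfl fun i _ => ?_
        by_cases his : i ≤ s
        · rw [if_pos his, Finset.card_image_of_injective _ (fun a b h => by injection h),
            card_tup L]
          congr 1
          omega
        · rw [if_neg his]
          rw [NN_neg L _ (by omega)]
          simp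
      · intro i _ j _ hij
        refine Finset.disjoint_left.mpr fun l hl hl' => hij ?_
        beta_reduce at hl hl'
        split at hl
        · rw [Finset.mem_image] at hl
          obtain ⟨t, _, rfl⟩ := hl
          split at hl'
          · rw [Finset.mem_image] at hl'
            obtain ⟨t', _, h⟩ := hl'
            injection h.symm
          · simp at hl'
        · simp at hl


open YoungDiagram

/-- Column bound list. -/
def Tl (lam : YoungDiagram) (j : ℕ) : ℕ := lam.colLen j / 2 - (lam.colLen (j + 1) + 1) / 2

def Ll (lam : YoungDiagram) : List ℕ := (List.range (lam.rowLen 0)).map (Tl lam)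

lemma colLen_eq_zero (lam : YoungDiagram) {j : ℕ} (hj : lam.rowLen 0 ≤ j) :
    lam.colLen j = 0 := by
  by_contra h
  have h1 : (0, j) ∈ lam := mem_iff_lt_colLen.mpr (by omega)
  have h2 : j < lam.rowLen 0 := mem_iff_lt_rowLen.mp h1
  omega

lemma hmo_div (lam : YoungDiagram) (hmo : lam.MildlyOdd) (j : ℕ) :
    (lam.colLen (j + 1) + 1) / 2 ≤ lam.colLen j / 2 := by
  have hba : lam.colLen (j + 1) ≤ lam.colLen j := lam.colLen_anti j (j + 1) (by omega)
  by_cases h2 : lam.colLen j % 2 = 1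
  · have hne : lam.colLen (j + 1) ≠ lam.colLen j := by
      intro he
      have := hmo (lam.colLen j) (Nat.odd_iff.mpr h2) j (j + 1) rfl he
      omega
    omega
  · omega

lemma colLen_le_of_le {μ ν : YoungDiagram} (h : μ ≤ ν) (j : ℕ) : μ.colLen j ≤ ν.colLen j := by
  by_contra h'
  push_neg at h'
  have h1 : (ν.colLen j, j) ∈ μ := mem_iff_lt_colLen.mpr h'
  have h2 : (ν.colLen j, j) ∈ ν := by
    rw [← mem_cells] at h1 ⊢
    exact cells_subset_iff.mpr h h1
  rw [mem_iff_lt_colLen] at h2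
  omega

lemma ext_colLen {μ ν : YoungDiagram} (h : ∀ j, μ.colLen j = ν.colLen j) : μ = ν := by
  apply YoungDiagram.ext
  ext ⟨i, j⟩
  rw [mem_cells, mem_cells, mem_iff_lt_colLen, mem_iff_lt_colLen, h j]

lemma card_sdiff_eq (lam μ : YoungDiagram) (h : μ ≤ lam) :
    (lam.cells \ μ.cells).card
      = ∑ j ∈ Finset.range (lam.rowLen 0), (lam.colLen j - μ.colLen j) := by
  rw [Finset.card_eq_sum_card_fiberwise
    (f := fun p : ℕ × ℕ => p.2) (t := Finset.range (lam.rowLen 0)) ?_]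
  · refine Finset.sum_congr rfl fun j _ => ?_
    have himg : (lam.cells \ μ.cells).filter (fun p : ℕ × ℕ => p.2 = j)
        = (Finset.Ico (μ.colLen j) (lam.colLen j)).image (fun i => (i, j)) := by
      ext ⟨i, j'⟩
      simp only [Finset.mem_filter, Finset.mem_sdiff, Finset.mem_image, Finset.mem_Ico,
        mem_cells, mem_iff_lt_colLen]
      constructor
      · rintro ⟨⟨hi, hni⟩, rfl⟩
        exact ⟨i, ⟨by omega, hi⟩, rfl⟩
      · rintro ⟨i', ⟨hge, hlt⟩, heq⟩
        rw [Prod.mk.injEq] at heq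
        obtain ⟨rfl, rfl⟩ := heq
        exact ⟨⟨hlt, by omega⟩, rfl⟩
    rw [himg, Finset.card_image_of_injective _ (fun a b hab => by
      rw [Prod.mk.injEq] at hab; exact hab.1), Nat.card_Ico]
  · intro x hx
    rw [Finset.mem_coe, Finset.mem_sdiff] at hx
    have h0 : (0, x.2) ∈ lam := lam.up_left_mem (Nat.zero_le _) le_rfl
      (show (x.1, x.2) ∈ lam from hx.1)
    rw [Finset.mem_coe, Finset.mem_range, ← mem_iff_lt_rowLen]
    exact h0

lemma f_lower {μ lam : YoungDiagram} {k : ℕ} (h3 : YoungDiagram.IsVerticalStrip μ lam k)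
    (j : ℕ) : lam.colLen (j + 1) ≤ μ.colLen j := by
  by_contra h
  push_neg at h
  obtain ⟨hle, -, hdis⟩ := h3
  have hca : lam.colLen (j + 1) ≤ lam.colLen j := lam.colLen_anti j (j + 1) (by omega)
  have hμa : μ.colLen (j + 1) ≤ μ.colLen j := μ.colLen_anti j (j + 1) (by omega)
  set i := μ.colLen j with hi
  have hb₁ : ((i, j) : ℕ × ℕ) ∈ lam.cells \ μ.cells := by
    rw [Finset.mem_sdiff, mem_cells, mem_cells, mem_iff_lt_colLen, mem_iff_lt_colLen]
    constructor
    · omega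
    · omega
  have hb₂ : ((i, j + 1) : ℕ × ℕ) ∈ lam.cells \ μ.cells := by
    rw [Finset.mem_sdiff, mem_cells, mem_cells, mem_iff_lt_colLen, mem_iff_lt_colLen]
    constructor
    · omega
    · omega
  have := hdis _ hb₁ _ hb₂ rfl
  rw [Prod.mk.injEq] at this
  omega

lemma list_sum_range (g : ℕ → ℕ) (n : ℕ) :
    ((List.range n).map g).sum = ∑ j ∈ Finset.range n, g j := by
  induction n with
  | zero => simp
  | succ n ih => rw [List.range_succ, List.map_append, List.sum_append, Finset.sum_range_succ, ih]; simp

lemma sum_eps (lam : YoungDiagram) :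
    ∑ j ∈ Finset.range (lam.rowLen 0), lam.colLen j % 2 = lam.oddColumns := by
  rw [YoungDiagram.oddColumns, Finset.card_filter]
  refine Finset.sum_congr rfl fun j _ => ?_
  by_cases h : Odd (lam.colLen j)
  · rw [if_pos h]; rw [Nat.odd_iff] at h; omega
  · rw [if_neg h]; rw [Nat.odd_iff] at h; omega


lemma f_anti {lam : YoungDiagram} {f : ℕ → ℕ}
    (hf : ∀ j, lam.colLen (j + 1) ≤ f j ∧ f j ≤ lam.colLen j) :
    ∀ j₁ j₂, j₁ ≤ j₂ → f j₂ ≤ f j₁ := by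
  intro j₁ j₂ h
  rcases Nat.eq_or_lt_of_le h with rfl | hlt
  · exact le_rfl
  · calc f j₂ ≤ lam.colLen j₂ := (hf j₂).2
      _ ≤ lam.colLen (j₁ + 1) := lam.colLen_anti (j₁ + 1) j₂ (by omega)
      _ ≤ f j₁ := (hf j₁).1

def mkMu (lam : YoungDiagram) (f : ℕ → ℕ)
    (hf : ∀ j, lam.colLen (j + 1) ≤ f j ∧ f j ≤ lam.colLen j) : YoungDiagram where
  cells := lam.cells.filter (fun p => p.1 < f p.2)
  isLowerSet := by
    intro p q hpq hq
    simp only [Finset.coe_filter, Set.mem_setOf_eq, Finset.mem_coe, mem_cells] at hq ⊢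
    obtain ⟨hq1, hq2⟩ := hq
    refine ⟨lam.isLowerSet hpq hq1, ?_⟩
    have h1 : f p.2 ≤ f q.2 := f_anti hf q.2 p.2 hpq.2
    have h2 : q.1 ≤ p.1 := hpq.1
    omega

lemma mem_mkMu {lam : YoungDiagram} {f : ℕ → ℕ}
    {hf : ∀ j, lam.colLen (j + 1) ≤ f j ∧ f j ≤ lam.colLen j} {i j : ℕ} :
    (i, j) ∈ mkMu lam f hf ↔ i < f j := by
  show (i, j) ∈ (lam.cells.filter (fun p => p.1 < f p.2)) ↔ _
  rw [Finset.mem_filter]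
  constructor
  · rintro ⟨-, h⟩; exact h
  · intro h
    refine ⟨?_, h⟩
    rw [mem_cells, mem_iff_lt_colLen]
    have := (hf j).2
    omega

lemma colLen_mkMu {lam : YoungDiagram} {f : ℕ → ℕ}
    {hf : ∀ j, lam.colLen (j + 1) ≤ f j ∧ f j ≤ lam.colLen j} (j : ℕ) :
    (mkMu lam f hf).colLen j = f j := by
  have h1 : ∀ i, i < (mkMu lam f hf).colLen j ↔ i < f j := by
    intro i
    rw [← mem_iff_lt_colLen, mem_mkMu]
  have h2 := h1 (f j)
  have h3 := h1 ((mkMu lam f hf).colLen j)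
  omega

lemma mkMu_le {lam : YoungDiagram} {f : ℕ → ℕ}
    {hf : ∀ j, lam.colLen (j + 1) ≤ f j ∧ f j ≤ lam.colLen j} : mkMu lam f hf ≤ lam :=
  cells_subset_iff.mp (Finset.filter_subset _ _)


lemma Ll_def (lam : YoungDiagram) : Ll lam = (List.range (lam.rowLen 0)).map (Tl lam) := rfl

lemma Tl_def (lam : YoungDiagram) (j : ℕ) :
    Tl lam j = lam.colLen j / 2 - (lam.colLen (j + 1) + 1) / 2 := rfl

lemma map_getD_eq {l : List ℕ} {n : ℕ} (h : l.length = n) :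
    (List.range n).map (fun j => l.getD j 0) = l := by
  apply List.ext_getElem
  · simp [h]
  · intro i h1 h2
    simp only [List.getElem_map, List.getElem_range]
    rw [List.getD_eq_getElem l 0 h2]

lemma toList_mem (lam : YoungDiagram) {μ : YoungDiagram} {k s : ℕ}
    (h1 : μ ≤ lam) (h2 : μ.HasEvenColumns) (h3 : YoungDiagram.IsVerticalStrip μ lam k)
    (hks : k = lam.oddColumns + 2 * s) :
    (List.range (lam.rowLen 0)).map (fun j => lam.colLen j / 2 - μ.colLen j / 2)
      ∈ tup (Ll lam) s := by
  rw [mem_tup]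
  constructor
  · rw [Ll_def, List.forall₂_map_right_iff, List.forall₂_map_left_iff, List.forall₂_same]
    intro j _
    have hb := f_lower h3 j
    have hub := colLen_le_of_le h1 j
    have hev : μ.colLen j % 2 = 0 := Nat.even_iff.mp (h2 j)
    rw [Tl_def]
    omega
  · rw [list_sum_range]
    have hsum : ∑ j ∈ Finset.range (lam.rowLen 0), (lam.colLen j - μ.colLen j) = k := by
      rw [← card_sdiff_eq lam μ h1]; exact h3.2.1
    have hpt : ∀ j ∈ Finset.range (lam.rowLen 0), lam.colLen j - μ.colLen j
        = 2 * (lam.colLen j / 2 - μ.colLen j / 2) + lam.colLen j % 2 := by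
      intro j _
      have hub := colLen_le_of_le h1 j
      have hev : μ.colLen j % 2 = 0 := Nat.even_iff.mp (h2 j)
      omega
    rw [Finset.sum_congr rfl hpt, Finset.sum_add_distrib, ← Finset.mul_sum, sum_eps] at hsum
    omega

lemma mult_eq (lam : YoungDiagram) (hmo : lam.MildlyOdd) (s : ℕ) :
    lam.mult (lam.oddColumns + 2 * s) = NN (Ll lam) (s : ℤ) := by
  classical
  set n := lam.rowLen 0 with hn
  have hcard : Nat.card {l : List ℕ // l ∈ tup (Ll lam) s} = (tup (Ll lam) s).card := by
    rw [Nat.card_eq_fintype_card, Fintype.card_coe]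
  rw [YoungDiagram.mult, ← card_tup, ← hcard]
  apply Nat.card_congr
  refine Equiv.ofBijective (fun μp => ⟨(List.range n).map
      (fun j => lam.colLen j / 2 - μp.1.colLen j / 2),
      toList_mem lam μp.2.1 μp.2.2.1 μp.2.2.2 rfl⟩) ⟨?_, ?_⟩
  · -- injectivity
    rintro ⟨μ₁, h1₁, h2₁, h3₁⟩ ⟨μ₂, h1₂, h2₂, h3₂⟩ h
    simp only [Subtype.mk.injEq] at h ⊢
    apply ext_colLen
    intro j
    by_cases hj : j < n
    · have hpt := List.map_inj_left.mp h j (List.mem_range.mpr hj)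
      have hub₁ := colLen_le_of_le h1₁ j
      have hub₂ := colLen_le_of_le h1₂ j
      have hev₁ : μ₁.colLen j % 2 = 0 := Nat.even_iff.mp (h2₁ j)
      have hev₂ : μ₂.colLen j % 2 = 0 := Nat.even_iff.mp (h2₂ j)
      omega
    · have e1 : lam.colLen j = 0 := colLen_eq_zero lam (by omega)
      have e2 := colLen_le_of_le h1₁ j
      have e3 := colLen_le_of_le h1₂ j
      omega
  · -- surjectivity
    rintro ⟨l, hl⟩
    rw [mem_tup] at hl
    obtain ⟨hfa, hsum⟩ := hl
    have hlen : l.length = n := by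
      have := hfa.length_eq
      simpa [Ll_def] using this
    set t : ℕ → ℕ := fun j => l.getD j 0 with ht
    have hl' : (List.range n).map t = l := map_getD_eq hlen
    have htb : ∀ j, j < n → t j ≤ Tl lam j := by
      rw [← hl', Ll_def, List.forall₂_map_right_iff, List.forall₂_map_left_iff,
        List.forall₂_same] at hfa
      intro j hj
      exact hfa j (List.mem_range.mpr hj)
    have hf : ∀ j, lam.colLen (j + 1) ≤ 2 * (lam.colLen j / 2 - t j)
        ∧ 2 * (lam.colLen j / 2 - t j) ≤ lam.colLen j := by
      intro j
      by_cases hj : j < n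
      · have hb := htb j hj
        have hdiv := hmo_div lam hmo j
        rw [Tl_def] at hb
        have hca := lam.colLen_anti j (j + 1) (by omega)
        omega
      · have e1 : lam.colLen j = 0 := colLen_eq_zero lam (by omega)
        have e2 : lam.colLen (j + 1) = 0 := colLen_eq_zero lam (by omega)
        omega
    have hdisj : ∀ c₁ ∈ lam.cells \ (mkMu lam _ hf).cells,
        ∀ c₂ ∈ lam.cells \ (mkMu lam _ hf).cells, c₁.1 = c₂.1 → c₁ = c₂ := by
      have key : ∀ a b i : ℕ, a < b → 2 * (lam.colLen a / 2 - t a) ≤ i →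
          i < lam.colLen b → False := by
        intro a b i hab hai hib
        have h1 : lam.colLen b ≤ lam.colLen (a + 1) := lam.colLen_anti (a + 1) b (by omega)
        have h2 := (hf a).1
        omega
      rintro ⟨i₁, j₁⟩ hc₁ ⟨i₂, j₂⟩ hc₂ hrow
      simp only [Finset.mem_sdiff, mem_cells, mem_iff_lt_colLen, colLen_mkMu] at hc₁ hc₂
      simp only at hrow
      subst hrow
      rcases lt_trichotomy j₁ j₂ with hlt | heq | hgt
      · exact absurd (key j₁ j₂ i₁ hlt (by omega) (by omega)) not_false
      · rw [heq]
      · exact absurd (key j₂ j₁ i₁ hgt (by omega) (by omega)) not_false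
    have hcolsum : ∑ j ∈ Finset.range n, (lam.colLen j - (mkMu lam _ hf).colLen j)
        = lam.oddColumns + 2 * s := by
      have hpt : ∀ j ∈ Finset.range n, lam.colLen j - (mkMu lam _ hf).colLen j
          = 2 * t j + lam.colLen j % 2 := by
        intro j hj
        rw [Finset.mem_range] at hj
        have hb := htb j hj
        have hdiv := hmo_div lam hmo j
        rw [Tl_def] at hb
        rw [colLen_mkMu]
        omega
      rw [Finset.sum_congr rfl hpt, Finset.sum_add_distrib, ← Finset.mul_sum, sum_eps]
      have hts : ∑ j ∈ Finset.range n, t j = s := by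
        rw [← list_sum_range, hl', hsum]
      omega
    refine ⟨⟨mkMu lam _ hf, mkMu_le, ?_, mkMu_le, ?_, hdisj⟩, ?_⟩
    · intro j
      rw [colLen_mkMu]
      exact Nat.even_iff.mpr (Nat.mul_mod_right 2 _)
    · rw [card_sdiff_eq lam _ mkMu_le, hcolsum]
    · apply Subtype.ext
      simp only
      apply List.ext_getElem
      · simp [hlen]
      · intro i hi1 hi2
        have hin : i < n := by simpa using hi1
        simp only [List.getElem_map, List.getElem_range]
        rw [colLen_mkMu]
        have hb := htb i hin
        have hdiv := hmo_div lam hmo i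
        rw [Tl_def] at hb
        have e1 : l[i] = t i := (List.getD_eq_getElem l 0 hi2).symm
        rw [e1]
        omega


lemma tele (F : ℕ → ℕ) (hF : ∀ j, F (j + 1) ≤ F j) (n : ℕ) :
    ∑ j ∈ Finset.range n, (F j - F (j + 1)) = F 0 - F n := by
  have hmono : ∀ m, F m ≤ F 0 := by
    intro m
    induction m with
    | zero => exact le_rfl
    | succ m ih => exact le_trans (hF m) ih
  induction n with
  | zero => simp
  | succ n ih =>
      rw [Finset.sum_range_succ, ih]
      have h1 := hF n
      have h2 := hmono n
      have h3 := hmono (n + 1)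
      omega

lemma sum_Ll (lam : YoungDiagram) (hmo : lam.MildlyOdd) :
    (Ll lam).sum + lam.oddColumns = (lam.ht + 1) / 2 := by
  set n := lam.rowLen 0 with hn
  rw [Ll_def, list_sum_range]
  have h1 : ∑ j ∈ Finset.range n, (Tl lam j + lam.colLen j % 2)
      = ∑ j ∈ Finset.range n, ((lam.colLen j + 1) / 2 - (lam.colLen (j + 1) + 1) / 2) := by
    refine Finset.sum_congr rfl fun j _ => ?_
    have hdiv := hmo_div lam hmo j
    rw [Tl_def]
    omega
  have h2 := tele (fun j => (lam.colLen j + 1) / 2)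
    (fun j => Nat.div_le_div_right (by
      have := lam.colLen_anti j (j + 1) (by omega); omega)) n
  rw [Finset.sum_add_distrib, sum_eps] at h1
  have hcn : lam.colLen n = 0 := colLen_eq_zero lam le_rfl
  have hht : lam.ht = lam.colLen 0 := rfl
  rw [h1, h2, hcn, hht]
  omega

lemma mult_eq_zero (lam : YoungDiagram) {k : ℕ} (hk : k < lam.oddColumns) :
    lam.mult k = 0 := by
  rw [YoungDiagram.mult]
  have : IsEmpty {μ : YoungDiagram // μ ≤ lam ∧ μ.HasEvenColumns
      ∧ YoungDiagram.IsVerticalStrip μ lam k} := by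
    constructor
    rintro ⟨μ, h1, h2, h3⟩
    have hsum : ∑ j ∈ Finset.range (lam.rowLen 0), (lam.colLen j - μ.colLen j) = k := by
      rw [← card_sdiff_eq lam μ h1]; exact h3.2.1
    have hge : ∑ j ∈ Finset.range (lam.rowLen 0), lam.colLen j % 2
        ≤ ∑ j ∈ Finset.range (lam.rowLen 0), (lam.colLen j - μ.colLen j) :=
      Finset.sum_le_sum fun j _ => by
        have hub := colLen_le_of_le h1 j
        have hev : μ.colLen j % 2 = 0 := Nat.even_iff.mp (h2 j)
        omega
    rw [sum_eps] at hge
    omega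
  exact Nat.card_of_isEmpty

end MultAux

/-- for a mildly odd diagram `lam` with `c` odd columns, the function
`mult lam`, restricted to the arguments of the same parity as `c`, is non-decreasing
on the segment from `0` to `⌈ht lam / 2⌉`. -/
theorem mult_monotone_of_mildlyOdd (lam : YoungDiagram) (hmo : lam.MildlyOdd)
    (k k' : ℕ) (hle : k ≤ k') (hub : k' ≤ (lam.ht + 1) / 2)
    (hk : k % 2 = lam.oddColumns % 2) (hk' : k' % 2 = lam.oddColumns % 2) :
    lam.mult k ≤ lam.mult k' := by
  by_cases hkc : k < lam.oddColumns
  · rw [MultAux.mult_eq_zero lam hkc]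
    exact Nat.zero_le _
  · push_neg at hkc
    have hkc' : lam.oddColumns ≤ k' := le_trans hkc hle
    obtain ⟨s, rfl⟩ : ∃ s, k = lam.oddColumns + 2 * s :=
      ⟨(k - lam.oddColumns) / 2, by omega⟩
    obtain ⟨s', rfl⟩ : ∃ s', k' = lam.oddColumns + 2 * s' :=
      ⟨(k' - lam.oddColumns) / 2, by omega⟩
    rw [MultAux.mult_eq lam hmo s, MultAux.mult_eq lam hmo s']
    have hsum := MultAux.sum_Ll lam hmo
    apply MultAux.NN_mono
    · exact_mod_cast (show s ≤ s' by omega)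
    · have h2 : s + s' ≤ (MultAux.Ll lam).sum := by omega
      exact_mod_cast h2
end
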